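/- arXiv:2007.01284 — 8 statements merged into one kernel-verified Lean document; each statement's English description precedes it below -/
import Mathlib

section
/- Let E be a real inner product space, let Φ : E → ℝ and Φ* ∈ ℝ satisfy Φ(y) ≥ Φ* for all y ∈ E, let ρ > 0, δ ≥ 0, let T be a positive integer, and let x^0, x^1, …, x^T be points of E such that Φ(x^{k+1}) + ρ‖x^{k+1} − x^k‖² ≤ Φ(x^k) + δ²/(2ρ) for every 0 ≤ k ≤ T − 1. Then there exists 0 ≤ k ≤ T − 1 with 2ρ‖x^{k+1} − x^k‖ ≤ 2·√( δ²/2 + ρ(Φ(x^0) − Φ*)/T ). -/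
/-! Summing the sufficient-decrease inequalities over the first `T` steps telescopes to
`ρ ∑ ‖x^{k+1} − x^k‖² ≤ Φ(x⁰) − Φ* + T δ²/(2ρ)`, so the shortest of these steps has
`ρ‖x^{k+1} − x^k‖² ≤ (Φ(x⁰) − Φ*)/T + δ²/(2ρ)`; multiplying by `ρ` and taking square roots
gives the bound. -/

open Finset

theorem sum_range_le_of_add_le {α : Type*} [AddCommGroup α] [PartialOrder α]
    [IsOrderedAddMonoid α] {f d : ℕ → α} {c : α} {T : ℕ}
    (h : ∀ k < T, f (k + 1) + d k ≤ f k + c) :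
    ∑ i ∈ range T, d i ≤ f 0 - f T + T • c :=
  calc ∑ i ∈ range T, d i
      ≤ ∑ i ∈ range T, (f i - f (i + 1) + c) :=
        sum_le_sum fun i hi ↦ by
          have := h i (mem_range.mp hi)
          rwa [sub_add_eq_add_sub, le_sub_iff_add_le, add_comm]
    _ = f 0 - f T + T • c := by
        rw [sum_add_distrib, sum_range_sub', sum_const, card_range]

theorem exists_lt_le_div_add_of_add_le {α : Type*} [Field α] [LinearOrder α]
    [IsStrictOrderedRing α] {f d : ℕ → α} {c m : α} {T : ℕ} (hT : 0 < T) (hm : m ≤ f T)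
    (h : ∀ k < T, f (k + 1) + d k ≤ f k + c) :
    ∃ k < T, d k ≤ (f 0 - m) / T + c := by
  have hsum : ∑ i ∈ range T, d i ≤ ∑ _i ∈ range T, ((f 0 - m) / T + c) := by
    have hT' : (T : α) ≠ 0 := Nat.cast_ne_zero.mpr hT.ne'
    rw [sum_const, card_range, nsmul_eq_mul, mul_add, mul_div_cancel₀ _ hT', ← nsmul_eq_mul]
    linarith [sum_range_le_of_add_le h]
  obtain ⟨k, hk, hdk⟩ := exists_le_of_sum_le (nonempty_range_iff.mpr hT.ne') hsum
  exact ⟨k, mem_range.mp hk, hdk⟩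

theorem ippm_small_step_exists_general
    {E : Type*} [NormedAddCommGroup E] [InnerProductSpace ℝ E]
    (Φ : E → ℝ) (Φstar : ℝ) (hlb : ∀ y : E, Φ y ≥ Φstar)
    (ρ δ : ℝ) (hρ : 0 < ρ)
    (T : ℕ) (hT : 0 < T) (x : ℕ → E)
    (hdec : ∀ k, k ≤ T - 1 →
      Φ (x (k + 1)) + ρ * ‖x (k + 1) - x k‖ ^ 2 ≤ Φ (x k) + δ ^ 2 / (2 * ρ)) :
    ∃ k, k ≤ T - 1 ∧
      2 * ρ * ‖x (k + 1) - x k‖ ≤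
        2 * Real.sqrt (δ ^ 2 / 2 + ρ * (Φ (x 0) - Φstar) / T) := by
  obtain ⟨k, hk, hstep⟩ := exists_lt_le_div_add_of_add_le (f := fun i ↦ Φ (x i))
    (d := fun i ↦ ρ * ‖x (i + 1) - x i‖ ^ 2) hT (hlb (x T))
    fun k hk ↦ hdec k (Nat.le_sub_one_of_lt hk)
  refine ⟨k, Nat.le_sub_one_of_lt hk, ?_⟩
  have hsq : (ρ * ‖x (k + 1) - x k‖) ^ 2 ≤ δ ^ 2 / 2 + ρ * (Φ (x 0) - Φstar) / T :=
    calc (ρ * ‖x (k + 1) - x k‖) ^ 2 = ρ * (ρ * ‖x (k + 1) - x k‖ ^ 2) := by ring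
      _ ≤ ρ * ((Φ (x 0) - Φstar) / T + δ ^ 2 / (2 * ρ)) := by gcongr
      _ = δ ^ 2 / 2 + ρ * (Φ (x 0) - Φstar) / T := by field_simp; ring
  rw [mul_assoc]
  gcongr
  exact Real.le_sqrt_of_sq_le hsq

/-- under the per-iteration sufficient-decrease inequality of an inexact
proximal point step, some consecutive pair of iterates among the first `T` satisfies
`2ρ‖x^{k+1} − x^k‖ ≤ 2√(δ²/2 + ρ(Φ(x⁰) − Φ*)/T)`. -/
theorem ippm_small_step_exists
    {E : Type*} [NormedAddCommGroup E] [InnerProductSpace ℝ E]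
    (Φ : E → ℝ) (Φstar : ℝ) (hlb : ∀ y : E, Φ y ≥ Φstar)
    (ρ δ : ℝ) (hρ : 0 < ρ) (hδ : 0 ≤ δ)
    (T : ℕ) (hT : 0 < T) (x : ℕ → E)
    (hdec : ∀ k, k ≤ T - 1 →
      Φ (x (k + 1)) + ρ * ‖x (k + 1) - x k‖ ^ 2 ≤ Φ (x k) + δ ^ 2 / (2 * ρ)) :
    ∃ k, k ≤ T - 1 ∧
      2 * ρ * ‖x (k + 1) - x k‖ ≤
        2 * Real.sqrt (δ ^ 2 / 2 + ρ * (Φ (x 0) - Φstar) / T) :=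
  ippm_small_step_exists_general Φ Φstar hlb ρ δ hρ T hT x hdec
end

section
/- Let E be a real inner product space, let Φ : E → ℝ and Φ* ∈ ℝ satisfy Φ(y) ≥ Φ* for all y ∈ E and Φ(x^0) > Φ*, let ρ > 0 and ε > 0. Let (x^k)_{k≥0} and (g^k)_{k≥0} be sequences in E such that for every k ≥ 0: ‖g^k‖ ≤ ε/4 and, for all y ∈ E, Φ(y) + ρ‖y − x^k‖² ≥ Φ(x^{k+1}) + ρ‖x^{k+1} − x^k‖² + ⟨g^k, y − x^{k+1}⟩ + (ρ/2)‖y − x^{k+1}‖². Set T = ⌈32ρ(Φ(x^0) − Φ*)/ε²⌉. Then there exists 0 ≤ k ≤ T − 1 with 2ρ‖x^{k+1} − x^k‖ ≤ ε/2; moreover, for any index k with 2ρ‖x^{k+1} − x^k‖ ≤ ε/2, the vector h := g^k − 2ρ(x^{k+1} − x^k) satisfies ‖h‖ ≤ ε and Φ(y) ≥ Φ(x^{k+1}) + ⟨h, y − x^{k+1}⟩ − (ρ/2)‖y − x^{k+1}‖² for all y ∈ E; that is, x^{k+1} is an ε-stationary point of the ρ-weakly convex function Φ. -/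
/-!
Testing the proximal inequality at `y = xᵏ` shows that every step of length `t` lowers `Φ` by at
least `(3ρ/2) t² − (ε/4) t`, which exceeds `ε²/(32ρ)` as long as the stopping criterion
`2ρt ≤ ε/2` fails. Since `Φ` is bounded below by `Φ*`, this can happen on at most
`(Φ(x⁰) − Φ*)/(ε²/(32ρ))` consecutive steps. Expanding `‖y − xᵏ‖²` around `xᵏ⁺¹` turns the
proximal inequality into a weak subgradient inequality for `Φ` at `xᵏ⁺¹`.
-/

open scoped RealInnerProductSpace

section Subgradient

variable {E : Type*} [NormedAddCommGroup E] [InnerProductSpace ℝ E]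

def IsStrongSubgradient (f : E → ℝ) (μ : ℝ) (x g : E) : Prop :=
  ∀ y, f x + ⟪g, y - x⟫ + μ / 2 * ‖y - x‖ ^ 2 ≤ f y

def IsWeakSubgradient (f : E → ℝ) (ρ : ℝ) (x h : E) : Prop :=
  ∀ y, f x + ⟪h, y - x⟫ - ρ / 2 * ‖y - x‖ ^ 2 ≤ f y

variable {Φ : E → ℝ} {ρ : ℝ} {a b g : E}

theorem IsStrongSubgradient.isWeakSubgradient_sub_smul
    (hb : IsStrongSubgradient (fun y ↦ Φ y + ρ * ‖y - a‖ ^ 2) ρ b g) :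
    IsWeakSubgradient Φ ρ b (g - (2 * ρ) • (b - a)) := by
  intro y
  have hexpand : ‖y - a‖ ^ 2 = ‖y - b‖ ^ 2 + 2 * ⟪b - a, y - b⟫ + ‖b - a‖ ^ 2 := by
    rw [← sub_add_sub_cancel y b a, norm_add_sq_real, real_inner_comm]
  have hy := hb y
  simp only [hexpand] at hy
  rw [inner_sub_left, real_inner_smul_left]
  linarith

theorem IsStrongSubgradient.prox_descent
    (hb : IsStrongSubgradient (fun y ↦ Φ y + ρ * ‖y - a‖ ^ 2) ρ b g) :
    3 * ρ / 2 * ‖b - a‖ ^ 2 - ‖g‖ * ‖b - a‖ ≤ Φ a - Φ b := by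
  have ha := hb a
  have hinner : -(‖g‖ * ‖b - a‖) ≤ ⟪g, a - b⟫ := by
    have hcs := abs_real_inner_le_norm g (a - b)
    rw [norm_sub_rev] at hcs
    exact neg_le_of_abs_le hcs
  simp only [sub_self, norm_zero, norm_sub_rev a b] at ha
  linarith

theorem IsStrongSubgradient.sq_div_lt_sub_of_stopping_fails {ε : ℝ} (hρ : 0 < ρ) (hε : 0 < ε)
    (hb : IsStrongSubgradient (fun y ↦ Φ y + ρ * ‖y - a‖ ^ 2) ρ b g) (hg : ‖g‖ ≤ ε / 4)
    (hstep : ε / 2 < 2 * ρ * ‖b - a‖) :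
    ε ^ 2 / (32 * ρ) < Φ a - Φ b := by
  set t := ‖b - a‖
  have hdescent := hb.prox_descent
  have ht : ε < 4 * ρ * t := by linarith
  have hgt : ‖g‖ * t ≤ ε / 4 * t := mul_le_mul_of_nonneg_right hg (norm_nonneg _)
  have hquad : ε ^ 2 / (32 * ρ) < 3 * ρ / 2 * t ^ 2 - ε / 4 * t := by
    -- `32ρ (3ρ/2 t² − ε/4 t) − ε² = (4ρt − ε)(12ρt + ε)`
    have hfac : 0 < (4 * ρ * t - ε) * (12 * ρ * t + ε) := by
      have : 0 ≤ ρ * t := mul_nonneg hρ.le (norm_nonneg _)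
      exact mul_pos (by linarith) (by linarith)
    rw [div_lt_iff₀ (by positivity)]
    nlinarith
  linarith

end Subgradient

theorem exists_sub_succ_le_of_bddBelow (u : ℕ → ℝ) {m c : ℝ} (hm : ∀ n, m ≤ u n) (hc : 0 ≤ c)
    {N : ℕ} (hN : u 0 - m ≤ N * c) : ∃ k ≤ N - 1, u k - u (k + 1) ≤ c := by
  by_contra! hbig
  have hsum : ((N - 1 + 1 : ℕ) : ℝ) * c < u 0 - u (N - 1 + 1) := by
    have := Finset.sum_lt_sum_of_nonempty (Finset.nonempty_range_add_one (n := N - 1))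
      fun k hk ↦ hbig k (Nat.lt_succ_iff.mp (Finset.mem_range.mp hk))
    rwa [Finset.sum_range_sub' u, Finset.sum_const, Finset.card_range, nsmul_eq_mul] at this
  have hNle : (N : ℝ) * c ≤ ((N - 1 + 1 : ℕ) : ℝ) * c :=
    mul_le_mul_of_nonneg_right (by norm_cast; omega) hc
  linarith [hm (N - 1 + 1)]

theorem ippm_complexity_general
    {E : Type*} [NormedAddCommGroup E] [InnerProductSpace ℝ E]
    (Φ : E → ℝ) (Φstar : ℝ) (hlb : ∀ y : E, Φ y ≥ Φstar)
    (ρ ε : ℝ) (hρ : 0 < ρ) (hε : 0 < ε)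
    (x g : ℕ → E)
    (hg : ∀ k : ℕ, ‖g k‖ ≤ ε / 4)
    (hprox : ∀ k : ℕ, ∀ y : E,
      Φ y + ρ * ‖y - x k‖ ^ 2 ≥
        Φ (x (k + 1)) + ρ * ‖x (k + 1) - x k‖ ^ 2
          + (inner ℝ (g k) (y - x (k + 1)) : ℝ)
          + ρ / 2 * ‖y - x (k + 1)‖ ^ 2) :
    (∃ k, k ≤ ⌈32 * ρ * (Φ (x 0) - Φstar) / ε ^ 2⌉₊ - 1 ∧
        2 * ρ * ‖x (k + 1) - x k‖ ≤ ε / 2) ∧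
    (∀ k : ℕ, 2 * ρ * ‖x (k + 1) - x k‖ ≤ ε / 2 →
      ‖g k - (2 * ρ) • (x (k + 1) - x k)‖ ≤ ε ∧
      ∀ y : E, Φ y ≥ Φ (x (k + 1))
          + (inner ℝ (g k - (2 * ρ) • (x (k + 1) - x k)) (y - x (k + 1)) : ℝ)
          - ρ / 2 * ‖y - x (k + 1)‖ ^ 2) := by
  have hstrong (k : ℕ) :
      IsStrongSubgradient (fun y ↦ Φ y + ρ * ‖y - x k‖ ^ 2) ρ (x (k + 1)) (g k) := hprox k
  refine ⟨?_, fun k hk ↦ ⟨?_, (hstrong k).isWeakSubgradient_sub_smul⟩⟩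
  · have hT : Φ (x 0) - Φstar ≤
        ⌈32 * ρ * (Φ (x 0) - Φstar) / ε ^ 2⌉₊ * (ε ^ 2 / (32 * ρ)) := by
      calc Φ (x 0) - Φstar = 32 * ρ * (Φ (x 0) - Φstar) / ε ^ 2 * (ε ^ 2 / (32 * ρ)) := by
            field_simp
        _ ≤ _ := mul_le_mul_of_nonneg_right (Nat.le_ceil _) (by positivity)
    obtain ⟨k, hkT, hk⟩ := exists_sub_succ_le_of_bddBelow (fun n ↦ Φ (x n))
      (fun n ↦ hlb (x n)) (by positivity) hT
    refine ⟨k, hkT, not_lt.mp fun h ↦ ?_⟩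
    have hdecrease := (hstrong k).sq_div_lt_sub_of_stopping_fails hρ hε (hg k) h
    exact hk.not_gt hdecrease
  · calc ‖g k - (2 * ρ) • (x (k + 1) - x k)‖
          ≤ ‖g k‖ + 2 * ρ * ‖x (k + 1) - x k‖ := by
            grw [norm_sub_le, norm_smul, Real.norm_of_nonneg (by positivity)]
      _ ≤ ε := by linarith [hg k]

/-- iPPM complexity theorem (Theorem 1 of the paper), sequence form.
Each `x^{k+1}` is an (ε/4)-approximate stationary point of the ρ-strongly convex
proximal subproblem `Φ_k(y) = Φ(y) + ρ‖y − x^k‖²` with certifying subgradient `g^k`.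
Within `T = ⌈32ρ(Φ(x⁰) − Φ*)/ε²⌉` iterations the stopping criterion
`2ρ‖x^{k+1} − x^k‖ ≤ ε/2` is met, and any iterate meeting it is an ε-stationary
point of the ρ-weakly convex function Φ, certified by `h = g^k − 2ρ(x^{k+1} − x^k)`. -/
theorem ippm_complexity
    {E : Type*} [NormedAddCommGroup E] [InnerProductSpace ℝ E]
    (Φ : E → ℝ) (Φstar : ℝ) (hlb : ∀ y : E, Φ y ≥ Φstar)
    (ρ ε : ℝ) (hρ : 0 < ρ) (hε : 0 < ε)
    (x g : ℕ → E) (h0 : Φ (x 0) > Φstar)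
    (hg : ∀ k : ℕ, ‖g k‖ ≤ ε / 4)
    (hprox : ∀ k : ℕ, ∀ y : E,
      Φ y + ρ * ‖y - x k‖ ^ 2 ≥
        Φ (x (k + 1)) + ρ * ‖x (k + 1) - x k‖ ^ 2
          + (inner ℝ (g k) (y - x (k + 1)) : ℝ)
          + ρ / 2 * ‖y - x (k + 1)‖ ^ 2) :
    (∃ k, k ≤ ⌈32 * ρ * (Φ (x 0) - Φstar) / ε ^ 2⌉₊ - 1 ∧
        2 * ρ * ‖x (k + 1) - x k‖ ≤ ε / 2) ∧
    (∀ k : ℕ, 2 * ρ * ‖x (k + 1) - x k‖ ≤ ε / 2 →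
      ‖g k - (2 * ρ) • (x (k + 1) - x k)‖ ≤ ε ∧
      ∀ y : E, Φ y ≥ Φ (x (k + 1))
          + (inner ℝ (g k - (2 * ρ) • (x (k + 1) - x k)) (y - x (k + 1)) : ℝ)
          - ρ / 2 * ‖y - x (k + 1)‖ ^ 2) :=
  ippm_complexity_general Φ Φstar hlb ρ ε hρ hε x g hg hprox
end

section
/- Let n, l, m be positive integers, let A be a real l×n matrix and b ∈ ℝ^l, and let X = {x ∈ ℝⁿ : ⟨c_i, x⟩ ≤ d_i for all i = 1, …, m} be a polyhedron cut out by finitely many affine inequalities (c_i ∈ ℝⁿ, d_i ∈ ℝ). Assume X is bounded (hence compact) and that X ∩ {x ∈ ℝⁿ : A x = b} is nonempty. Then there exists a constant v > 0 such that for every x ∈ X, v‖Ax − b‖ ≤ dist(0, {Aᵀ(Ax − b) + z : z ∈ N_X(x)}). -/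
/-!
The key input is Hoffman's error bound: there is `θ > 0` such that every `x ∈ X` has some
`x' ∈ X` with `Ax' = b` and `‖x - x'‖ ≤ θ ‖Ax - b‖`. Then for `z ∈ N_X(x)` and `r = Ax - b`,
`‖r‖² = ⟪Aᵀr, x - x'⟫ ≤ ⟪Aᵀr + z, x - x'⟫ ≤ θ ‖r‖ ‖Aᵀr + z‖`, so `v = θ⁻¹` works.

The error bound is first proved for a polyhedral cone `K = {x | 0 ≤ cᵢ x}` and a linear map `L`,
by induction on the dimension of `span K`. If `K ∩ ker L = 0`, compactness of `K ∩ sphere 0 1`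
gives `‖x‖ ≤ θ ‖L x‖`. Otherwise take `0 ≠ u ∈ K ∩ ker L`: sliding `x` along `-u` does not change
`L x` and lands on a facet `K ∩ ker cᵢ` (or, when every `cᵢ` vanishes on `u`, on `K ∩ ker a` for
some `a` with `a u = 1`), a cone of smaller dimension. The bounded polyhedron `X` is reduced to
the cone case by homogenization, `(y, τ) ↦ τ⁻¹ y`: when the nearby point of the homogenized cone
has `τ` far from `1`, `‖Ax - b‖` is bounded below and any feasible point of the bounded `X` will do.
-/

open Module PointedCone

section Algebra

variable {𝕜 V : Type*} [Field 𝕜] [AddCommGroup V] [Module 𝕜 V]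

lemma finrank_span_lt_of_subset_ker [FiniteDimensional 𝕜 V] {K K' : Set V} {f : Dual 𝕜 V}
    {u : V} (hK' : K' ⊆ K) (hK'f : K' ⊆ LinearMap.ker f) (hu : u ∈ K) (hfu : f u ≠ 0) :
    finrank 𝕜 (Submodule.span 𝕜 K') < finrank 𝕜 (Submodule.span 𝕜 K) := by
  refine Submodule.finrank_lt_finrank_of_lt
    ((Submodule.span_mono hK').lt_of_ne fun h => hfu ?_)
  exact Submodule.span_le.2 hK'f (h ▸ Submodule.subset_span hu)

variable [LinearOrder 𝕜] [IsStrictOrderedRing 𝕜]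

lemma PointedCone.dual_insert_neg_subset_ker {s : Set (Dual 𝕜 V)} {c : Dual 𝕜 V} (hc : c ∈ s) :
    (dual .id (insert (-c) s) : Set V) ⊆ LinearMap.ker c := fun _ hx =>
  le_antisymm (neg_nonneg.1 (hx (Set.mem_insert _ _))) (hx (Set.mem_insert_of_mem _ hc))

lemma PointedCone.exists_sub_smul_mem_dual_insert_neg {s : Set (Dual 𝕜 V)} (hs : s.Finite)
    {u x : V} (hx : x ∈ dual .id s) (hsu : ∃ c ∈ s, 0 < c u) :
    ∃ c ∈ s, 0 < c u ∧ ∃ t : 𝕜, 0 ≤ t ∧ x - t • u ∈ dual .id (insert (-c) s) := by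
  obtain ⟨c, ⟨hcs, hcu⟩, hcmin⟩ := Set.exists_min_image {c ∈ s | 0 < c u} (fun c => c x / c u)
    (hs.subset fun _ h => h.1) hsu
  have ht : 0 ≤ c x / c u := div_nonneg (hx hcs) hcu.le
  refine ⟨c, hcs, hcu, c x / c u, ht, ?_⟩
  simp only [mem_dual, Set.forall_mem_insert, LinearMap.id_coe, id_eq, LinearMap.neg_apply,
    map_sub, map_smul, smul_eq_mul]
  refine ⟨by rw [mul_neg, div_mul_cancel₀ _ hcu.ne', sub_neg_eq_add, neg_add_cancel],
    fun c' hc's => ?_⟩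
  rcases lt_or_ge 0 (c' u) with hc'u | hc'u
  · have := hcmin c' ⟨hc's, hc'u⟩
    rw [le_div_iff₀ hc'u] at this
    exact sub_nonneg.2 this
  · have hc'x : 0 ≤ c' x := hx hc's
    nlinarith

end Algebra

section Normed

variable {E F : Type*} [NormedAddCommGroup E] [NormedSpace ℝ E]
  [NormedAddCommGroup F] [NormedSpace ℝ F]

def HasHoffmanBound (L : E →ₗ[ℝ] F) (K : Set E) : Prop :=
  ∃ θ > 0, ∀ x ∈ K, ∃ y ∈ K, L y = 0 ∧ ‖x - y‖ ≤ θ * ‖L x‖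

lemma HasHoffmanBound.of_cover {ι : Type*} [Finite ι] {L : E →ₗ[ℝ] F} {K : PointedCone ℝ E}
    {K' : ι → Set E} (hK' : ∀ i, K' i ⊆ K) (h : ∀ i, HasHoffmanBound L (K' i))
    (hcover : ∀ x ∈ K, ∃ i, ∃ v ∈ K, L v = 0 ∧ x - v ∈ K' i) : HasHoffmanBound L K := by
  choose θ hθ hθK using h
  obtain ⟨M, hM⟩ := (Set.finite_range θ).bddAbove
  refine ⟨max M 1, by positivity, fun x hx => ?_⟩
  obtain ⟨i, v, hvK, hLv, hxv⟩ := hcover x hx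
  obtain ⟨y, hyK, hLy, hy⟩ := hθK i (x - v) hxv
  refine ⟨y + v, K.add_mem (hK' i hyK) hvK, by simp [hLy, hLv], ?_⟩
  calc ‖x - (y + v)‖ = ‖x - v - y‖ := by rw [sub_add_eq_sub_sub_swap]
    _ ≤ θ i * ‖L x‖ := by simpa [hLv] using hy
    _ ≤ max M 1 * ‖L x‖ := by gcongr; exact (hM ⟨i, rfl⟩).trans (le_max_left _ _)

def homogenizationCone {ι : Type*} (g : ι → Dual ℝ E) (d : ι → ℝ) : PointedCone ℝ (E × ℝ) :=
  dual .id (insert (LinearMap.snd ℝ E ℝ)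
    (Set.range fun i => d i • LinearMap.snd ℝ E ℝ - (g i).comp (LinearMap.fst ℝ E ℝ)))

lemma mem_homogenizationCone {ι : Type*} {g : ι → Dual ℝ E} {d : ι → ℝ} {y : E} {τ : ℝ} :
    (y, τ) ∈ homogenizationCone g d ↔ 0 ≤ τ ∧ ∀ i, g i y ≤ d i * τ := by
  simp [homogenizationCone, sub_nonneg]

lemma inv_smul_mem_of_mem_homogenizationCone {ι : Type*} {g : ι → Dual ℝ E} {d : ι → ℝ} {y : E}
    {τ : ℝ} (h : (y, τ) ∈ homogenizationCone g d) (hτ : 0 < τ) (i : ι) :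
    g i (τ⁻¹ • y) ≤ d i := by
  rw [map_smul, smul_eq_mul, inv_mul_le_iff₀ hτ, mul_comm]
  exact (mem_homogenizationCone.1 h).2 i

variable [FiniteDimensional ℝ E]

lemma PointedCone.exists_norm_le_mul_norm_of_ker_trivial {K : PointedCone ℝ E}
    (hK : IsClosed (K : Set E)) (L : E →ₗ[ℝ] F) (hKL : ∀ x ∈ K, L x = 0 → x = 0) :
    ∃ θ > 0, ∀ x ∈ K, ‖x‖ ≤ θ * ‖L x‖ := by
  have hS : IsCompact ((K : Set E) ∩ Metric.sphere 0 1) := (isCompact_sphere 0 1).inter_left hK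
  obtain ⟨μ, hμ, hμS⟩ := hS.exists_forall_le' L.continuous_of_finiteDimensional.norm.continuousOn
    fun x hx => norm_pos_iff.2 fun h => by simpa [hKL x hx.1 h] using hx.2
  refine ⟨μ⁻¹, inv_pos.2 hμ, fun x hx => ?_⟩
  rcases eq_or_ne x 0 with rfl | hx0
  · simp
  have := hμS (‖x‖⁻¹ • x) ⟨K.smul_mem (by positivity) hx, by simp [norm_smul, hx0]⟩
  rw [map_smul, norm_smul, norm_inv, norm_norm, le_inv_mul_iff₀ (norm_pos_iff.2 hx0)] at this
  rwa [le_inv_mul_iff₀ hμ, mul_comm]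

theorem hasHoffmanBound_dual (L : E →ₗ[ℝ] F) {s : Set (Dual ℝ E)} (hs : s.Finite) :
    HasHoffmanBound L (dual .id s : Set E) := by
  induction hr : finrank ℝ (Submodule.span ℝ (dual .id s : Set E))
    using Nat.strong_induction_on generalizing s with
  | _ r ih =>
  set K := dual .id s
  by_cases hker : ∀ x ∈ K, L x = 0 → x = 0
  · obtain ⟨θ, hθ, hθK⟩ := K.exists_norm_le_mul_norm_of_ker_trivial
      (isClosed_dual fun f => f.continuous_of_finiteDimensional) L hker
    exact ⟨θ, hθ, fun x hx => ⟨0, K.zero_mem, map_zero L, by simpa using hθK x hx⟩⟩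
  push Not at hker
  obtain ⟨u, huK, hLu, hu0⟩ := hker
  have ih_facet {t : Set (Dual ℝ E)} (ht : t.Finite) {c : Dual ℝ E} (hct : c ∈ t) (hst : s ⊆ t)
      (hcu : c u ≠ 0) : HasHoffmanBound L (dual .id (insert (-c) t) : Set E) := by
    have hlt := finrank_span_lt_of_subset_ker (dual_anti (hst.trans (Set.subset_insert _ _)))
      (dual_insert_neg_subset_ker hct) huK hcu
    exact ih _ (hr ▸ hlt) (ht.insert _) rfl
  by_cases hsu : ∃ c ∈ s, 0 < c u
  · have : Finite {c ∈ s | 0 < c u} := (hs.subset fun _ h => h.1).to_subtype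
    refine HasHoffmanBound.of_cover
      (K' := fun c : {c ∈ s | 0 < c u} => dual .id (insert (-c.1) s))
      (fun _ => dual_anti (Set.subset_insert _ _))
      (fun c => ih_facet hs c.2.1 subset_rfl c.2.2.ne') fun x hx => ?_
    obtain ⟨c, hcs, hcu, τ, hτ, hx'⟩ := exists_sub_smul_mem_dual_insert_neg hs hx hsu
    exact ⟨⟨c, hcs, hcu⟩, τ • u, K.smul_mem hτ huK, by simp [hLu], hx'⟩
  have hsu : ∀ c ∈ s, c u = 0 := fun c hc =>
    le_antisymm (not_lt.1 fun h => hsu ⟨c, hc, h⟩) (huK hc)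
  obtain ⟨a, ha⟩ := Projective.exists_dual_eq_one ℝ hu0
  refine HasHoffmanBound.of_cover (K' := fun _ : Unit => dual .id (insert (-a) (insert a s)))
      (fun _ => dual_anti ((Set.subset_insert _ _).trans (Set.subset_insert _ _)))
      (fun _ => ih_facet (hs.insert a) (Set.mem_insert _ _) (Set.subset_insert _ _) (by simp [ha]))
      fun x hx => ⟨(), a x • u, fun c hc => by simp [hsu c hc], by simp [hLu], ?_⟩
  rintro c (rfl | rfl | hc)
  · simp [ha]
  · simp [ha]
  · simpa [hsu c hc] using hx hc

theorem exists_hoffman_bound_of_isBounded {ι : Type*} [Finite ι] (g : ι → Dual ℝ E) (d : ι → ℝ)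
    (L : E →ₗ[ℝ] F) (b : F) (hbdd : Bornology.IsBounded {x | ∀ i, g i x ≤ d i}) {x₀ : E}
    (hx₀ : ∀ i, g i x₀ ≤ d i) (hLx₀ : L x₀ = b) :
    ∃ θ > 0, ∀ x, (∀ i, g i x ≤ d i) →
      ∃ y, (∀ i, g i y ≤ d i) ∧ L y = b ∧ ‖x - y‖ ≤ θ * ‖L x - b‖ := by
  obtain ⟨R, hR⟩ := hbdd.exists_norm_le
  have hR0 : 0 ≤ R := (norm_nonneg _).trans (hR x₀ hx₀)
  obtain ⟨θ, hθ, hθK⟩ : HasHoffmanBound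
      (L.comp (LinearMap.fst ℝ E ℝ) - (LinearMap.snd ℝ E ℝ).smulRight b) (homogenizationCone g d) :=
    hasHoffmanBound_dual _ ((Set.finite_range _).insert _)
  refine ⟨θ * (1 + 4 * R), by positivity, fun x hx => ?_⟩
  obtain ⟨⟨y, τ⟩, hq, hLq, hdist⟩ :=
    hθK (x, 1) (mem_homogenizationCone.2 ⟨zero_le_one, by simpa using hx⟩)
  simp only [LinearMap.sub_apply, LinearMap.comp_apply, LinearMap.fst_apply,
    LinearMap.smulRight_apply, LinearMap.snd_apply, one_smul, sub_eq_zero, Prod.mk_sub_mk,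
    Prod.norm_def, Real.norm_eq_abs, sup_le_iff] at hLq hdist
  set r := ‖L x - b‖
  have hr : 0 ≤ θ * r := by positivity
  rcases lt_or_ge τ (1 / 2) with hτ | hτ
  · refine ⟨x₀, hx₀, hLx₀, ?_⟩
    have : 1 / 2 ≤ θ * r := by linarith [le_abs_self (1 - τ)]
    calc ‖x - x₀‖ ≤ ‖x‖ + ‖x₀‖ := norm_sub_le _ _
      _ ≤ 2 * R := by linarith [hR x hx, hR x₀ hx₀]
      _ ≤ θ * (1 + 4 * R) * r := by nlinarith
  · have hτ0 : 0 < τ := by linarith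
    have hy' := inv_smul_mem_of_mem_homogenizationCone hq hτ0
    refine ⟨τ⁻¹ • y, hy', by rw [map_smul, hLq, inv_smul_smul₀ hτ0.ne'], ?_⟩
    have hyy' : y - τ⁻¹ • y = (τ - 1) • τ⁻¹ • y := by
      rw [sub_smul, one_smul, smul_inv_smul₀ hτ0.ne']
    calc ‖x - τ⁻¹ • y‖ ≤ ‖x - y‖ + ‖y - τ⁻¹ • y‖ := norm_sub_le_norm_sub_add_norm_sub _ _ _
      _ = ‖x - y‖ + |1 - τ| * ‖τ⁻¹ • y‖ := by
          rw [hyy', norm_smul, Real.norm_eq_abs, abs_sub_comm]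
      _ ≤ θ * r + θ * r * R := by gcongr; exacts [hdist.1, hdist.2, hR _ hy']
      _ ≤ θ * (1 + 4 * R) * r := by nlinarith

end Normed

lemma norm_le_mul_norm_adjoint_apply_add {E F : Type*} [NormedAddCommGroup E]
    [InnerProductSpace ℝ E] [FiniteDimensional ℝ E] [NormedAddCommGroup F] [InnerProductSpace ℝ F]
    [FiniteDimensional ℝ F]
    (T : E →ₗ[ℝ] F) {b : F} {x y z : E} {θ : ℝ} (hθ : 0 ≤ θ) (hTy : T y = b)
    (hz : 0 ≤ inner ℝ z (x - y)) (hxy : ‖x - y‖ ≤ θ * ‖T x - b‖) :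
    ‖T x - b‖ ≤ θ * ‖T.adjoint (T x - b) + z‖ := by
  set r := T x - b
  set w := T.adjoint r + z
  have hTxy : T (x - y) = r := by rw [map_sub, hTy]
  have key : ‖r‖ ^ 2 ≤ ‖r‖ * (θ * ‖w‖) :=
    calc ‖r‖ ^ 2 = inner ℝ (T.adjoint r) (x - y) := by
          rw [LinearMap.adjoint_inner_left, hTxy, real_inner_self_eq_norm_sq]
      _ ≤ inner ℝ w (x - y) := by rw [inner_add_left]; linarith
      _ ≤ ‖w‖ * ‖x - y‖ := real_inner_le_norm _ _
      _ ≤ ‖w‖ * (θ * ‖r‖) := by gcongr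
      _ = ‖r‖ * (θ * ‖w‖) := by ring
  rcases (norm_nonneg r).eq_or_lt with hr | hr
  · rw [← hr]; positivity
  · exact le_of_mul_le_mul_left (by rwa [sq] at key) hr

open Matrix

theorem polyhedral_regularity_general
    (n l m : ℕ)
    (A : Matrix (Fin l) (Fin n) ℝ) (b : EuclideanSpace ℝ (Fin l))
    (c : Fin m → EuclideanSpace ℝ (Fin n)) (d : Fin m → ℝ)
    (X : Set (EuclideanSpace ℝ (Fin n)))
    (hX : X = {x : EuclideanSpace ℝ (Fin n) | ∀ i : Fin m, (inner ℝ (c i) x : ℝ) ≤ d i})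
    (hbdd : Bornology.IsBounded X)
    (hfeas : (X ∩ {x : EuclideanSpace ℝ (Fin n) | Matrix.toEuclideanLin A x = b}).Nonempty) :
    ∃ v : ℝ, 0 < v ∧ ∀ x ∈ X,
      v * ‖Matrix.toEuclideanLin A x - b‖ ≤
        Metric.infDist 0
          {w : EuclideanSpace ℝ (Fin n) | ∃ z : EuclideanSpace ℝ (Fin n),
            (∀ x' ∈ X, (inner ℝ z (x - x') : ℝ) ≥ 0) ∧
            w = Matrix.toEuclideanLin Aᵀ (Matrix.toEuclideanLin A x - b) + z} := by
  subst hX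
  obtain ⟨x₀, hx₀, hAx₀⟩ := hfeas
  obtain ⟨θ, hθ, hθX⟩ := exists_hoffman_bound_of_isBounded (fun i => innerₛₗ ℝ (c i)) d
    (toEuclideanLin A) b hbdd hx₀ hAx₀
  have hAT : toEuclideanLin Aᵀ = (toEuclideanLin A).adjoint := by
    rw [← conjTranspose_eq_transpose_of_trivial, toEuclideanLin_conjTranspose_eq_adjoint]
  refine ⟨θ⁻¹, inv_pos.2 hθ, fun x hx => ?_⟩
  refine (Metric.le_infDist ?_).2 ?_
  · exact ⟨_, 0, fun _ _ => by simp, (add_zero _).symm⟩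
  rintro _ ⟨z, hz, rfl⟩
  obtain ⟨y, hy, hAy, hxy⟩ := hθX x hx
  rw [dist_zero_left, inv_mul_le_iff₀ hθ, hAT]
  exact norm_le_mul_norm_adjoint_apply_add _ hθ.le hAy (hz y hy) hxy

/-- Claim 1 of the paper: on a bounded polyhedron `X` meeting the
affine set `{Ax = b}`, the regularity condition
`v‖Ax − b‖ ≤ dist(0, Aᵀ(Ax − b) + N_X(x))` holds uniformly for some `v > 0`. -/
theorem polyhedral_regularity
    (n l m : ℕ) (hn : 0 < n) (hl : 0 < l) (hm : 0 < m)
    (A : Matrix (Fin l) (Fin n) ℝ) (b : EuclideanSpace ℝ (Fin l))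
    (c : Fin m → EuclideanSpace ℝ (Fin n)) (d : Fin m → ℝ)
    (X : Set (EuclideanSpace ℝ (Fin n)))
    (hX : X = {x : EuclideanSpace ℝ (Fin n) | ∀ i : Fin m, (inner ℝ (c i) x : ℝ) ≤ d i})
    (hbdd : Bornology.IsBounded X)
    (hfeas : (X ∩ {x : EuclideanSpace ℝ (Fin n) | Matrix.toEuclideanLin A x = b}).Nonempty) :
    ∃ v : ℝ, 0 < v ∧ ∀ x ∈ X,
      v * ‖Matrix.toEuclideanLin A x - b‖ ≤
        Metric.infDist 0
          {w : EuclideanSpace ℝ (Fin n) | ∃ z : EuclideanSpace ℝ (Fin n),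
            (∀ x' ∈ X, (inner ℝ z (x - x') : ℝ) ≥ 0) ∧
            w = Matrix.toEuclideanLin Aᵀ (Matrix.toEuclideanLin A x - b) + z} :=
  polyhedral_regularity_general n l m A b c d X hX hbdd hfeas
end

section
/- Let l, n be positive integers, let A be a real l×n matrix with A Aᵀ equal to the l×l identity matrix, let x̂ ∈ ℝⁿ satisfy ‖x̂‖ < 1, and set b = A x̂. Let x ∈ ℝⁿ satisfy ‖x‖ = 1 and ⟨x, Aᵀ(Ax − b)⟩ ≤ 0. Then the l×l matrix A(I_n − x xᵀ)Aᵀ is positive definite; that is, ⟨y, A(I_n − x xᵀ)Aᵀ y⟩ > 0 for every nonzero y ∈ ℝ^l. -/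
open Matrix InnerProductSpace

open scoped RealInnerProductSpace

/-! With `A Aᵀ = 1`, the quadratic form of `A (1 - x xᵀ) Aᵀ` at `y` is `‖u‖² - ⟪x, u⟫²`
for `u = Aᵀ y ≠ 0`, so by Cauchy–Schwarz it is positive unless `u`, and hence `x`, lies in
the range of `Aᵀ`. In that case `AᵀA x = x`, since `AᵀA` is the orthogonal projection onto
that range, and then `⟪x, Aᵀ(A x - b)⟫ = 1 - ⟪x, x̂⟫ > 0`. -/

theorem abs_real_inner_lt_norm_mul_norm_of_notMem_span {F : Type*} [NormedAddCommGroup F]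
    [InnerProductSpace ℝ F] {x u : F} (hx : x ≠ 0) (hu : u ∉ ℝ ∙ x) :
    |⟪x, u⟫_ℝ| < ‖x‖ * ‖u‖ := by
  refine (abs_real_inner_le_norm x u).lt_of_ne fun h => hu ?_
  rw [← Real.norm_eq_abs] at h
  exact Or.resolve_left (((norm_inner_eq_norm_tfae ℝ x u).out 0 3).1 h) hx

theorem real_inner_sub_rankOne_self_apply {F : Type*} [NormedAddCommGroup F]
    [InnerProductSpace ℝ F] (x u : F) :
    ⟪u, u - rankOne ℝ x x u⟫_ℝ = ‖u‖ ^ 2 - ⟪x, u⟫_ℝ ^ 2 := by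
  rw [rankOne_apply, inner_sub_right, real_inner_smul_right, real_inner_self_eq_norm_sq,
    real_inner_comm]
  ring

theorem Submodule.mem_of_mem_span_singleton_of_ne_zero {K M : Type*} [DivisionRing K]
    [AddCommGroup M] [Module K M] {p : Submodule K M} {x u : M} (hu : u ∈ p) (hu0 : u ≠ 0)
    (hux : u ∈ K ∙ x) :
    x ∈ p := by
  obtain ⟨c, rfl⟩ := Submodule.mem_span_singleton.1 hux
  have hc : c ≠ 0 := by rintro rfl; simp at hu0
  simpa [smul_smul, hc] using p.smul_mem c⁻¹ hu

section Coisometry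

variable {E F : Type*} [NormedAddCommGroup E] [InnerProductSpace ℝ E] [FiniteDimensional ℝ E]
  [NormedAddCommGroup F] [InnerProductSpace ℝ F] [FiniteDimensional ℝ F] {T : E →ₗ[ℝ] F}

theorem adjoint_apply_ne_zero_of_comp_adjoint_eq_id (hT : T ∘ₗ T.adjoint = LinearMap.id) {y : F}
    (hy : y ≠ 0) : T.adjoint y ≠ 0 := by
  intro h
  have hTy := congr($hT y)
  rw [LinearMap.comp_apply, h, map_zero, LinearMap.id_apply] at hTy
  exact hy hTy.symm

theorem adjoint_apply_apply_of_mem_range_adjoint (hT : T ∘ₗ T.adjoint = LinearMap.id) {x : E}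
    (hx : x ∈ LinearMap.range T.adjoint) : T.adjoint (T x) = x := by
  obtain ⟨z, rfl⟩ := hx
  rw [← LinearMap.comp_apply T, hT, LinearMap.id_apply]

theorem notMem_range_adjoint_of_inner_adjoint_sub_nonpos (hT : T ∘ₗ T.adjoint = LinearMap.id)
    {x xhat : E} (hx : ‖x‖ = 1) (hxhat : ‖xhat‖ < 1) (hobt : ⟪x, T.adjoint (T x - T xhat)⟫_ℝ ≤ 0) :
    x ∉ LinearMap.range T.adjoint := by
  intro hrange
  have hproj : ⟪x, T.adjoint (T x - T xhat)⟫_ℝ = 1 - ⟪x, xhat⟫_ℝ := by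
    rw [← map_sub, LinearMap.adjoint_inner_right, ← LinearMap.adjoint_inner_left,
      adjoint_apply_apply_of_mem_range_adjoint hT hrange, inner_sub_right,
      real_inner_self_eq_norm_sq, hx, one_pow]
  have : ⟪x, xhat⟫_ℝ < 1 := calc
    ⟪x, xhat⟫_ℝ ≤ ‖x‖ * ‖xhat‖ := real_inner_le_norm x xhat
    _ < 1 := by rwa [hx, one_mul]
  linarith

theorem inner_comp_id_sub_rankOne_comp_adjoint_pos (hT : T ∘ₗ T.adjoint = LinearMap.id) {x : E}
    (hx : ‖x‖ ≤ 1) (hxT : x ∉ LinearMap.range T.adjoint) {y : F} (hy : y ≠ 0) :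
    0 < ⟪y, (T ∘ₗ (LinearMap.id - (rankOne ℝ x x).toLinearMap) ∘ₗ T.adjoint) y⟫_ℝ := by
  set u := T.adjoint y
  have hu : u ≠ 0 := adjoint_apply_ne_zero_of_comp_adjoint_eq_id hT hy
  have hx0 : x ≠ 0 := fun h => hxT (h ▸ Submodule.zero_mem _)
  have hux : u ∉ ℝ ∙ x := fun h =>
    hxT (Submodule.mem_of_mem_span_singleton_of_ne_zero (LinearMap.mem_range_self _ y) hu h)
  have hcs : |⟪x, u⟫_ℝ| < ‖u‖ := calc
    |⟪x, u⟫_ℝ| < ‖x‖ * ‖u‖ := abs_real_inner_lt_norm_mul_norm_of_notMem_span hx0 hux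
    _ ≤ ‖u‖ := mul_le_of_le_one_left (norm_nonneg u) hx
  rw [LinearMap.comp_apply, LinearMap.comp_apply, ← LinearMap.adjoint_inner_left,
    LinearMap.sub_apply, LinearMap.id_apply, ContinuousLinearMap.coe_coe, real_inner_sub_rankOne_self_apply, sub_pos, ← sq_abs]
  gcongr

end Coisometry

theorem toEuclideanLin_comp_adjoint_eq_id {l n : ℕ} {A : Matrix (Fin l) (Fin n) ℝ}
    (hA : A * Aᵀ = 1) : toEuclideanLin A ∘ₗ (toEuclideanLin A).adjoint = LinearMap.id := by
  rw [← toEuclideanLin_conjTranspose_eq_adjoint, conjTranspose_eq_transpose_of_trivial,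
    ← toLpLin_mul_same, hA, toLpLin_one]

theorem toEuclideanLin_mul_one_sub_vecMulVec_mul_transpose {l n : ℕ}
    (A : Matrix (Fin l) (Fin n) ℝ) (x : EuclideanSpace ℝ (Fin n)) :
    toEuclideanLin (A * (1 - vecMulVec x x) * Aᵀ) =
      toEuclideanLin A ∘ₗ (LinearMap.id - (rankOne ℝ x x).toLinearMap) ∘ₗ
        (toEuclideanLin A).adjoint := by
  have hrank : toEuclideanLin (vecMulVec x x) = (rankOne ℝ x x).toLinearMap := by
    have h := symm_toEuclideanLin_rankOne x x
    rw [star_trivial] at h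
    rw [← h, LinearEquiv.apply_symm_apply]
  rw [← toEuclideanLin_conjTranspose_eq_adjoint, conjTranspose_eq_transpose_of_trivial,
    toLpLin_mul_same, toLpLin_mul_same, map_sub, toLpLin_one, hrank, LinearMap.comp_assoc]

theorem ball_regularity_key_posdef_general
    (l n : ℕ)
    (A : Matrix (Fin l) (Fin n) ℝ) (hA : A * Aᵀ = 1)
    (xhat : EuclideanSpace ℝ (Fin n)) (hxhat : ‖xhat‖ < 1)
    (b : EuclideanSpace ℝ (Fin l)) (hb : b = Matrix.toEuclideanLin A xhat)
    (x : EuclideanSpace ℝ (Fin n)) (hx : ‖x‖ = 1)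
    (hobt : (inner ℝ x (Matrix.toEuclideanLin Aᵀ (Matrix.toEuclideanLin A x - b)) : ℝ) ≤ 0) :
    ∀ y : EuclideanSpace ℝ (Fin l), y ≠ 0 →
      0 < (inner ℝ y (Matrix.toEuclideanLin (A * (1 - Matrix.vecMulVec x x) * Aᵀ) y) : ℝ) := by
  intro y hy
  have hT := toEuclideanLin_comp_adjoint_eq_id hA
  rw [hb, ← conjTranspose_eq_transpose_of_trivial, toEuclideanLin_conjTranspose_eq_adjoint] at hobt
  rw [toEuclideanLin_mul_one_sub_vecMulVec_mul_transpose]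
  exact inner_comp_id_sub_rankOne_comp_adjoint_pos hT hx.le
    (notMem_range_adjoint_of_inner_adjoint_sub_nonpos hT hx hxhat hobt) hy

/-- if `A Aᵀ = I`, `b = A x̂` with `‖x̂‖ < 1`, and `x` is a unit vector
with `⟨x, Aᵀ(Ax − b)⟩ ≤ 0`, then `A(I − x xᵀ)Aᵀ` is positive definite. -/
theorem ball_regularity_key_posdef
    (l n : ℕ) (hl : 0 < l) (hn : 0 < n)
    (A : Matrix (Fin l) (Fin n) ℝ) (hA : A * Aᵀ = 1)
    (xhat : EuclideanSpace ℝ (Fin n)) (hxhat : ‖xhat‖ < 1)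
    (b : EuclideanSpace ℝ (Fin l)) (hb : b = Matrix.toEuclideanLin A xhat)
    (x : EuclideanSpace ℝ (Fin n)) (hx : ‖x‖ = 1)
    (hobt : (inner ℝ x (Matrix.toEuclideanLin Aᵀ (Matrix.toEuclideanLin A x - b)) : ℝ) ≤ 0) :
    ∀ y : EuclideanSpace ℝ (Fin l), y ≠ 0 →
      0 < (inner ℝ y (Matrix.toEuclideanLin (A * (1 - Matrix.vecMulVec x x) * Aᵀ) y) : ℝ) :=
  ball_regularity_key_posdef_general l n A hA xhat hxhat b hb x hx hobt
end

section
/- Let l, n be positive integers, let A be a real l×n matrix whose rows are linearly independent (full row rank), let r > 0, let X = {x ∈ ℝⁿ : ‖x‖ ≤ r} be the closed Euclidean ball of radius r, let b ∈ ℝ^l, and suppose there exists x̂ ∈ ℝⁿ with ‖x̂‖ < r and A x̂ = b. Then there exists a constant v > 0 such that for every x ∈ X, v‖Ax − b‖ ≤ dist(0, {Aᵀ(Ax − b) + z : z ∈ N_X(x)}). -/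
/-!
If the closed ball of radius `ρ` about `c` lies in `X`, a normal vector `z` to `X` at `x` satisfies
`ρ‖z‖ ≤ ⟪z, x - c⟫`. For `g = Aᵀ(Ax - b)` and a feasible `c` (`Ac = b`) one has
`⟪g, x - c⟫ = ‖Ax - b‖² ≥ 0`, so `ρ‖z‖ ≤ ⟪g + z, x - c⟫ ≤ ‖g + z‖‖x - c‖`, and hence
`ρ‖g‖ ≤ (ρ + ‖x - c‖)‖g + z‖`. Full row rank makes `Aᵀ` injective, so `‖Ax - b‖ ≤ K‖g‖`.
-/

open Matrix Metric RealInnerProductSpace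

section NormalCone

variable {E : Type*} [NormedAddCommGroup E] [InnerProductSpace ℝ E]

def normalCone (X : Set E) (x : E) : Set E := {z | ∀ x' ∈ X, 0 ≤ ⟪z, x - x'⟫}

theorem mul_norm_le_inner_of_mem_normalCone {X : Set E} {x c z : E} {ρ : ℝ} (hρ : 0 ≤ ρ)
    (hball : closedBall c ρ ⊆ X) (hz : z ∈ normalCone X x) : ρ * ‖z‖ ≤ ⟪z, x - c⟫ := by
  rcases eq_or_ne z 0 with rfl | hz0
  · simp
  have hnz : 0 < ‖z‖ := norm_pos_iff.mpr hz0
  -- test the normal vector against the boundary point of the ball in its own direction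
  have hmem : c + (ρ / ‖z‖) • z ∈ X := hball <| by
    rw [mem_closedBall, dist_eq_norm, add_sub_cancel_left, norm_smul, Real.norm_of_nonneg
      (by positivity), div_mul_cancel₀ _ hnz.ne']
  have := hz _ hmem
  rw [show x - (c + (ρ / ‖z‖) • z) = (x - c) - (ρ / ‖z‖) • z by abel, inner_sub_right,
    real_inner_smul_right, real_inner_self_eq_norm_mul_norm] at this
  calc ρ * ‖z‖ = ρ / ‖z‖ * (‖z‖ * ‖z‖) := by field_simp
    _ ≤ ⟪z, x - c⟫ := by linarith

theorem mul_norm_le_mul_norm_add_of_mem_normalCone {X : Set E} {x c g z : E} {ρ : ℝ}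
    (hρ : 0 ≤ ρ) (hball : closedBall c ρ ⊆ X) (hz : z ∈ normalCone X x)
    (hg : 0 ≤ ⟪g, x - c⟫) : ρ * ‖g‖ ≤ (ρ + ‖x - c‖) * ‖g + z‖ := by
  have hz' : ρ * ‖z‖ ≤ ‖g + z‖ * ‖x - c‖ :=
    calc ρ * ‖z‖ ≤ ⟪z, x - c⟫ := mul_norm_le_inner_of_mem_normalCone hρ hball hz
      _ ≤ ⟪g + z, x - c⟫ := by rw [inner_add_left]; linarith
      _ ≤ ‖g + z‖ * ‖x - c‖ := real_inner_le_norm _ _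
  have hg' : ‖g‖ ≤ ‖g + z‖ + ‖z‖ := by
    simpa using norm_sub_le (g + z) z
  nlinarith

end NormalCone

section Regularity

variable {E F : Type*} [NormedAddCommGroup E] [InnerProductSpace ℝ E] [FiniteDimensional ℝ E]
  [NormedAddCommGroup F] [InnerProductSpace ℝ F] [FiniteDimensional ℝ F]

theorem mul_norm_sub_le_of_mem_normalCone (T : E →ₗ[ℝ] F) {K : NNReal}
    (hK : ∀ u, ‖u‖ ≤ K * ‖T.adjoint u‖) {X : Set E} {x c z : E} {b : F} {ρ : ℝ} (hρ : 0 ≤ ρ)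
    (hball : closedBall c ρ ⊆ X) (hc : T c = b) (hz : z ∈ normalCone X x) :
    ρ * ‖T x - b‖ ≤ K * (ρ + ‖x - c‖) * ‖T.adjoint (T x - b) + z‖ := by
  have hg : ⟪T.adjoint (T x - b), x - c⟫ = ‖T x - b‖ ^ 2 := by
    rw [LinearMap.adjoint_inner_left, map_sub, hc, real_inner_self_eq_norm_sq]
  have := mul_norm_le_mul_norm_add_of_mem_normalCone hρ hball hz (hg ▸ sq_nonneg _)
  calc ρ * ‖T x - b‖ ≤ ρ * (K * ‖T.adjoint (T x - b)‖) := mul_le_mul_of_nonneg_left (hK _) hρ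
    _ = K * (ρ * ‖T.adjoint (T x - b)‖) := by ring
    _ ≤ K * ((ρ + ‖x - c‖) * ‖T.adjoint (T x - b) + z‖) := by gcongr
    _ = _ := by ring

end Regularity

theorem Matrix.injective_toEuclideanLin_transpose {l n : Type*} [Fintype l] [DecidableEq l]
    [Fintype n] {A : Matrix l n ℝ} (hA : LinearIndependent ℝ A.row) :
    Function.Injective (toEuclideanLin Aᵀ) := by
  intro u v huv
  have := congrArg WithLp.ofLp huv
  simp only [ofLp_toLpLin, toLin'_apply, mulVec_transpose] at this
  exact WithLp.ofLp_injective 2 (Matrix.vecMul_injective_iff.mpr hA this)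

theorem ball_regularity_general
    (l n : ℕ)
    (A : Matrix (Fin l) (Fin n) ℝ) (hrank : LinearIndependent ℝ (fun i : Fin l => A i))
    (r : ℝ)
    (X : Set (EuclideanSpace ℝ (Fin n)))
    (hX : X = {x : EuclideanSpace ℝ (Fin n) | ‖x‖ ≤ r})
    (b : EuclideanSpace ℝ (Fin l))
    (xhat : EuclideanSpace ℝ (Fin n)) (hxhat : ‖xhat‖ < r)
    (hfeas : Matrix.toEuclideanLin A xhat = b) :
    ∃ v : ℝ, 0 < v ∧ ∀ x ∈ X,
      v * ‖Matrix.toEuclideanLin A x - b‖ ≤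
        Metric.infDist 0
          {w : EuclideanSpace ℝ (Fin n) | ∃ z : EuclideanSpace ℝ (Fin n),
            (∀ x' ∈ X, (inner ℝ z (x - x') : ℝ) ≥ 0) ∧
            w = Matrix.toEuclideanLin Aᵀ (Matrix.toEuclideanLin A x - b) + z} := by
  subst hX
  set T := toEuclideanLin A
  have hadj : T.adjoint = toEuclideanLin Aᵀ := by
    rw [← toEuclideanLin_conjTranspose_eq_adjoint, conjTranspose_eq_transpose_of_trivial]
  obtain ⟨K, hK, hKT⟩ := T.adjoint.exists_antilipschitzWith
    (LinearMap.ker_eq_bot.mpr (hadj ▸ injective_toEuclideanLin_transpose hrank))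
  set ρ := r - ‖xhat‖
  have hρ : 0 < ρ := sub_pos.mpr hxhat
  have hr : 0 < r := (norm_nonneg xhat).trans_lt hxhat
  have hball : closedBall xhat ρ ⊆ {y | ‖y‖ ≤ r} := fun y hy =>
    mem_closedBall_zero_iff.mp (closedBall_subset_closedBall' (by simp [ρ]) hy)
  refine ⟨ρ / (K * (ρ + 2 * r)), by positivity, fun x hx => ?_⟩
  have hdist : ‖x - xhat‖ ≤ 2 * r := by
    have hxr : ‖x‖ ≤ r := hx
    linarith [norm_sub_le x xhat]
  refine (le_infDist ?_).mpr ?_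
  · exact ⟨_, 0, fun _ _ => by simp, (add_zero _).symm⟩
  rintro _ ⟨z, hz, rfl⟩
  have key := mul_norm_sub_le_of_mem_normalCone T (fun u => hKT.le_mul_norm (map_zero _) u)
    hρ.le hball hfeas hz
  rw [hadj] at key
  rw [dist_zero_left, div_mul_eq_mul_div, div_le_iff₀ (by positivity)]
  calc ρ * ‖T x - b‖ ≤ K * (ρ + ‖x - xhat‖) * ‖toEuclideanLin Aᵀ (T x - b) + z‖ := key
    _ ≤ K * (ρ + 2 * r) * ‖toEuclideanLin Aᵀ (T x - b) + z‖ := by gcongr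
    _ = _ := mul_comm _ _

/-- Claim 2 of the paper: for a full-row-rank matrix `A`, the
regularity condition `v‖Ax − b‖ ≤ dist(0, Aᵀ(Ax − b) + N_X(x))` holds uniformly
on the closed ball `X` of radius `r` whenever some strictly interior point of the
ball satisfies `A x̂ = b`. -/
theorem ball_regularity
    (l n : ℕ) (hl : 0 < l) (hn : 0 < n)
    (A : Matrix (Fin l) (Fin n) ℝ) (hrank : LinearIndependent ℝ (fun i : Fin l => A i))
    (r : ℝ) (hr : 0 < r)
    (X : Set (EuclideanSpace ℝ (Fin n)))
    (hX : X = {x : EuclideanSpace ℝ (Fin n) | ‖x‖ ≤ r})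
    (b : EuclideanSpace ℝ (Fin l))
    (xhat : EuclideanSpace ℝ (Fin n)) (hxhat : ‖xhat‖ < r)
    (hfeas : Matrix.toEuclideanLin A xhat = b) :
    ∃ v : ℝ, 0 < v ∧ ∀ x ∈ X,
      v * ‖Matrix.toEuclideanLin A x - b‖ ≤
        Metric.infDist 0
          {w : EuclideanSpace ℝ (Fin n) | ∃ z : EuclideanSpace ℝ (Fin n),
            (∀ x' ∈ X, (inner ℝ z (x - x') : ℝ) ≥ 0) ∧
            w = Matrix.toEuclideanLin Aᵀ (Matrix.toEuclideanLin A x - b) + z} :=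
  ball_regularity_general l n A hrank r X hX b xhat hxhat hfeas
end

section
/- Let E be a real normed space, let S ⊆ E be a nonempty set, let a, g ∈ E, and let β > 0, v > 0, r ≥ 0, ε ≥ 0. Suppose (i) v·r ≤ dist(−a, {s/β : s ∈ S}) and (ii) dist(0, {g + β·a + s : s ∈ S}) ≤ ε. Then r ≤ (ε + ‖g‖) / (v·β). -/
/-!
Multiplying (i) by `β` turns it into `v r β ≤ dist(-β a, S)`. Since `dist(·, S)` is 1-Lipschitz,
moving the base point to `-(g + β a)` costs at most `‖g‖`, and `dist(-(g + β a), S)` is the distance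
`dist(0, g + β a + S)` bounded by `ε` in (ii).
-/

open Metric Pointwise

theorem Metric.infDist_vadd_set {E : Type*} [SeminormedAddCommGroup E] (x b : E) (s : Set E) :
    infDist x (b +ᵥ s) = infDist (x - b) s := by
  rw [infDist, infDist, ← infEDist_vadd b (x - b) s, vadd_eq_add, add_sub_cancel]

theorem Metric.norm_mul_infDist_inv_smul_set {𝕜 E : Type*} [NormedDivisionRing 𝕜]
    [SeminormedAddCommGroup E] [Module 𝕜 E] [NormSMulClass 𝕜 E] {c : 𝕜} (hc : c ≠ 0)
    (s : Set E) (x : E) :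
    ‖c‖ * infDist x (c⁻¹ • s) = infDist (c • x) s := by
  rw [← infDist_smul₀ hc, smul_inv_smul₀ hc]

theorem feasibility_bound_step_general
    {E : Type*} [NormedAddCommGroup E] [NormedSpace ℝ E]
    (S : Set E) (a g : E)
    (β v r ε : ℝ) (hβ : 0 < β) (hv : 0 < v)
    (h1 : v * r ≤ Metric.infDist (-a) {u : E | ∃ s ∈ S, u = (1 / β) • s})
    (h2 : Metric.infDist 0 {u : E | ∃ s ∈ S, u = g + β • a + s} ≤ ε) :
    r ≤ (ε + ‖g‖) / (v * β) := by
  have hscaled : {u : E | ∃ s ∈ S, u = (1 / β) • s} = β⁻¹ • S := by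
    ext u; simp [Set.mem_smul_set, eq_comm]
  have hshifted : {u : E | ∃ s ∈ S, u = g + β • a + s} = (g + β • a) +ᵥ S := by
    ext u; simp [Set.mem_vadd_set, eq_comm]
  rw [hscaled] at h1
  rw [hshifted] at h2
  rw [le_div_iff₀ (by positivity)]
  calc r * (v * β) = β * (v * r) := by ring
    _ ≤ ‖β‖ * infDist (-a) (β⁻¹ • S) := by
      rw [Real.norm_of_nonneg hβ.le]; gcongr
    _ = infDist (-(β • a)) S := by rw [norm_mul_infDist_inv_smul_set hβ.ne', smul_neg]
    _ ≤ infDist (0 - (g + β • a)) S + dist (-(β • a)) (0 - (g + β • a)) :=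
      infDist_le_infDist_add_dist
    _ = infDist 0 ((g + β • a) +ᵥ S) + ‖g‖ := by
      rw [infDist_vadd_set, dist_eq_norm]; congr 2; abel
    _ ≤ ε + ‖g‖ := by gcongr

/-- the feasibility-bound step: if `v·r ≤ dist(−a, S/β)` and
`dist(0, g + βa + S) ≤ ε`, then `r ≤ (ε + ‖g‖)/(vβ)`. -/
theorem feasibility_bound_step
    {E : Type*} [NormedAddCommGroup E] [NormedSpace ℝ E]
    (S : Set E) (hS : S.Nonempty) (a g : E)
    (β v r ε : ℝ) (hβ : 0 < β) (hv : 0 < v) (hr : 0 ≤ r) (hε : 0 ≤ ε)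
    (h1 : v * r ≤ Metric.infDist (-a) {u : E | ∃ s ∈ S, u = (1 / β) • s})
    (h2 : Metric.infDist 0 {u : E | ∃ s ∈ S, u = g + β • a + s} ≤ ε) :
    r ≤ (ε + ‖g‖) / (v * β) :=
  feasibility_bound_step_general S a g β v r ε hβ hv h1 h2
end

section
/- Consider the problem min over x ∈ ℝⁿ of f₀(x) = g(x) + h(x) subject to c(x) = 0, where g : ℝⁿ → ℝ is differentiable, h : ℝⁿ → ℝ is convex, and c : ℝⁿ → ℝ^l is differentiable with Jacobian J_c(x). Let ε > 0, β₀ > 0, σ > 1, w₀ > 0, set β_k = β₀σ^k, and let (x^k)_{k≥0} ⊆ ℝⁿ and (y^k)_{k≥0} ⊆ ℝ^l satisfy: (a) y^0 = 0 and y^{k+1} = y^k + w_k c(x^{k+1}) where w_k = w₀ min{1, γ_k/‖c(x^{k+1})‖} (w_k = w₀ if c(x^{k+1}) = 0) and γ_k = (log 2)²‖c(x^0)‖/((k+1)(log(k+2))²); (b) for every k ≥ 0, dist(0, {∇g(x^{k+1}) + J_c(x^{k+1})ᵀ(y^k + β_k c(x^{k+1})) + s : s ∈ ∂h(x^{k+1})})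 ≤ ε; (c) (regularity) there is v > 0 with v‖c(x^k)‖ ≤ dist(−J_c(x^k)ᵀc(x^k), {s/β_{k−1} : s ∈ ∂h(x^k)}) for all k ≥ 1; (d) ‖∇g(x^k)‖ ≤ B₀ and the operator norm of J_c(x^k) is at most B_c for all k. Let y_max = w₀‖c(x^0)‖(log 2)²·∑_{t=0}^{∞} 1/((t+1)(log(t+2))²) and K = ⌈log_σ((ε + B₀ + B_c·y_max)/(v·β₀·ε))⌉ + 1. Then x^K is an ε-KKT point: ‖c(x^K)‖ ≤ ε and, with y = y^{K−1} + β_{K−1}c(x^K), dist(0, {∇g(x^K) + J_c(x^K)ᵀ y + s : s ∈ ∂h(x^K)}) ≤ ε. -/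
/-!
The multipliers stay bounded by `ymax`: each clipped dual step has length at most `w₀ γ_k`, and
`∑ γ_k` is a convergent Bertrand series. The stationarity residual set of the `K`-th subproblem is
the regularity set `∂h(x^K) / β_{K-1}` scaled by `β_{K-1}` and translated by
`∇g(x^K) + J_c(x^K)ᵀ (y^{K-1} + β_{K-1} c(x^K))`, so regularity and ε-stationarity together give
`v β_{K-1} ‖c(x^K)‖ ≤ ε + B₀ + B_c ymax`, and `K` is chosen so that `β_{K-1} v ε` exceeds the
right-hand side.
The multiplier certificate of `x^K` is ε-stationarity of the `K`-th subproblem itself.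
-/

open Metric Pointwise

theorem summable_one_div_succ_mul_log_succ_succ_sq :
    Summable fun t : ℕ => 1 / (((t : ℝ) + 1) * Real.log ((t : ℝ) + 2) ^ 2) := by
  set F : ℕ → ℝ := fun m => 1 / (m * Real.log (m + 1) ^ 2)
  have hF_antitone : ∀ ⦃m k : ℕ⦄, 0 < m → m ≤ k → F k ≤ F m := by
    intro m k hm hmk
    have hm' : (1 : ℝ) ≤ m := by exact_mod_cast hm
    have hlog : 0 < Real.log ((m : ℝ) + 1) := Real.log_pos (by linarith)
    have hmk' : (m : ℝ) ≤ k := by exact_mod_cast hmk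
    simp only [F]
    gcongr
  -- Cauchy condensation: `2 ^ (k + 1) ≤ (2 ^ k + 1) ^ 2` gives
  -- `2 ^ k F (2 ^ k) ≤ 4 / ((k + 1) log 2) ^ 2`.
  have hcondensed : Summable fun k : ℕ => (2 : ℝ) ^ k * F (2 ^ k) := by
    have hlog2 : 0 < Real.log 2 := Real.log_pos one_lt_two
    refine Summable.of_nonneg_of_le (fun k => by positivity) (fun k => ?_)
      (((summable_nat_add_iff 1).mpr (Real.summable_one_div_nat_pow.mpr one_lt_two)).mul_left
        (4 / Real.log 2 ^ 2))
    have hpow : (2 : ℝ) ^ (k + 1) ≤ ((2 : ℝ) ^ k + 1) ^ 2 := by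
      rw [pow_succ]
      nlinarith [pow_pos (two_pos : (0 : ℝ) < 2) k]
    have hlog : ((k : ℝ) + 1) * Real.log 2 ≤ 2 * Real.log ((2 : ℝ) ^ k + 1) := by
      have := Real.log_le_log (by positivity) hpow
      rwa [Real.log_pow, Real.log_pow, Nat.cast_add_one] at this
    have hk : (0 : ℝ) < (k : ℝ) + 1 := by positivity
    simp only [F]
    push_cast
    have hL : 0 < Real.log ((2 : ℝ) ^ k + 1) := by nlinarith
    calc (2 : ℝ) ^ k * (1 / ((2 : ℝ) ^ k * Real.log ((2 : ℝ) ^ k + 1) ^ 2))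
        = 1 / Real.log ((2 : ℝ) ^ k + 1) ^ 2 := by field_simp
      _ ≤ 1 / (((k + 1) * Real.log 2) / 2) ^ 2 := by gcongr; linarith
      _ = 4 / Real.log 2 ^ 2 * (1 / ((k : ℝ) + 1) ^ 2) := by field_simp; ring
  have hF : Summable F :=
    (summable_condensed_iff_of_nonneg (fun m => by positivity) hF_antitone).mp hcondensed
  refine ((summable_nat_add_iff 1).mpr hF).congr fun t => ?_
  simp only [F]
  push_cast
  ring_nf

theorem norm_clipped_smul_le {E : Type*} [NormedAddCommGroup E] [NormedSpace ℝ E]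
    [DecidableEq E] {w₀ γ : ℝ} (hw₀ : 0 ≤ w₀) (hγ : 0 ≤ γ) (u : E) :
    ‖(if u = 0 then w₀ else w₀ * min 1 (γ / ‖u‖)) • u‖ ≤ w₀ * γ := by
  split_ifs with hu
  · simpa [hu] using mul_nonneg hw₀ hγ
  · have hu' : 0 < ‖u‖ := norm_pos_iff.mpr hu
    rw [norm_smul, Real.norm_of_nonneg (by positivity)]
    calc w₀ * min 1 (γ / ‖u‖) * ‖u‖ ≤ w₀ * (γ / ‖u‖) * ‖u‖ := by
          gcongr; exact min_le_right _ _
      _ = w₀ * γ := by field_simp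

theorem norm_le_tsum_of_norm_sub_le {E : Type*} [SeminormedAddCommGroup E] {y : ℕ → E}
    {a : ℕ → ℝ} (hy₀ : y 0 = 0) (ha : Summable a) (ha₀ : ∀ k, 0 ≤ a k)
    (hstep : ∀ k, ‖y (k + 1) - y k‖ ≤ a k) (k : ℕ) : ‖y k‖ ≤ ∑' t, a t := by
  have := dist_le_range_sum_of_dist_le (f := y) (d := a) k fun {t} _ => by
    rw [dist_comm, dist_eq_norm]; exact hstep t
  rw [hy₀, dist_zero_left] at this
  exact this.trans (ha.sum_le_tsum _ fun t _ => ha₀ t)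

theorem norm_le_of_clipped_steps {E : Type*} [NormedAddCommGroup E] [NormedSpace ℝ E]
    [DecidableEq E] {w₀ C : ℝ} (hw₀ : 0 ≤ w₀) (hC : 0 ≤ C) {u y : ℕ → E} {γ w : ℕ → ℝ}
    (hγ : ∀ k : ℕ, γ k = Real.log 2 ^ 2 * C / (((k : ℝ) + 1) * Real.log ((k : ℝ) + 2) ^ 2))
    (hw : ∀ k, w k = if u k = 0 then w₀ else w₀ * min 1 (γ k / ‖u k‖))
    (hy₀ : y 0 = 0) (hy : ∀ k, y (k + 1) = y k + w k • u k) (k : ℕ) :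
    ‖y k‖ ≤ w₀ * C * Real.log 2 ^ 2 *
      ∑' t : ℕ, 1 / (((t : ℝ) + 1) * Real.log ((t : ℝ) + 2) ^ 2) := by
  have hγ₀ : ∀ t, 0 ≤ γ t := fun t => by rw [hγ]; positivity
  have hterm : ∀ t : ℕ, w₀ * γ t = w₀ * C * Real.log 2 ^ 2 *
      (1 / (((t : ℝ) + 1) * Real.log ((t : ℝ) + 2) ^ 2)) := fun t => by rw [hγ]; ring
  have hstep : ∀ t, ‖y (t + 1) - y t‖ ≤ w₀ * γ t := fun t => by
    rw [hy, add_sub_cancel_left, hw]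
    exact norm_clipped_smul_le hw₀ (hγ₀ t) (u t)
  rw [← tsum_mul_left, ← tsum_congr hterm]
  exact norm_le_tsum_of_norm_sub_le hy₀
    ((summable_one_div_succ_mul_log_succ_succ_sq.mul_left _).congr fun t => (hterm t).symm)
    (fun t => mul_nonneg hw₀ (hγ₀ t)) hstep k

theorem le_pow_natCeil_logb {σ : ℝ} (hσ : 1 < σ) (r : ℝ) : r ≤ σ ^ ⌈Real.logb σ r⌉₊ := by
  rcases le_or_gt r 0 with hr | hr
  · exact hr.trans (by positivity)
  · calc r = σ ^ Real.logb σ r := (Real.rpow_logb (by linarith) hσ.ne' hr).symm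
      _ ≤ σ ^ (⌈Real.logb σ r⌉₊ : ℝ) :=
          Real.rpow_le_rpow_of_exponent_le hσ.le (Nat.le_ceil _)
      _ = σ ^ ⌈Real.logb σ r⌉₊ := Real.rpow_natCast _ _

theorem mul_infDist_smul_le {E : Type*} [NormedAddCommGroup E] [NormedSpace ℝ E]
    (P : E → Prop) (p a : E) {β : ℝ} (hβ : 0 < β) :
    β * infDist p {u | ∃ s, P s ∧ u = (1 / β) • s} ≤
      ‖β • p + a‖ + infDist 0 {u | ∃ s, P s ∧ u = a + s} := by
  have hcancel : ∀ s : E, β • (1 / β) • s = s := fun s => by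
    rw [smul_smul, mul_one_div_cancel hβ.ne', one_smul]
  have hscale : β • {u | ∃ s, P s ∧ u = (1 / β) • s} = {s | P s} := by
    ext s
    simp only [Set.mem_smul_set, Set.mem_ofPred_eq]
    constructor
    · rintro ⟨_, ⟨s, hs, rfl⟩, rfl⟩
      rwa [hcancel]
    · exact fun hs => ⟨(1 / β) • s, ⟨s, hs, rfl⟩, hcancel s⟩
  have htranslate : {u | ∃ s, P s ∧ u = a + s} = (a + ·) '' {s | P s} := by
    ext u
    simp only [Set.mem_ofPred_eq, Set.mem_image]
    exact exists_congr fun s => and_congr_right' eq_comm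
  calc β * infDist p {u | ∃ s, P s ∧ u = (1 / β) • s}
      = infDist (β • p) {s | P s} := by
        rw [← hscale, infDist_smul₀ hβ.ne', Real.norm_of_nonneg hβ.le]
    _ ≤ infDist (-a) {s | P s} + dist (β • p) (-a) := infDist_le_infDist_add_dist
    _ = ‖β • p + a‖ + infDist 0 {u | ∃ s, P s ∧ u = a + s} := by
        rw [htranslate, ← infDist_image (isometry_add_left a) (x := -a), add_neg_cancel,
          dist_eq_norm, sub_neg_eq_add, add_comm]

theorem ialm_eps_kkt_general
    (n l : ℕ)
    (g' : EuclideanSpace ℝ (Fin n) → EuclideanSpace ℝ (Fin n))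
    (h : EuclideanSpace ℝ (Fin n) → ℝ)
    (c : EuclideanSpace ℝ (Fin n) → EuclideanSpace ℝ (Fin l))
    (Jc : EuclideanSpace ℝ (Fin n) →
      (EuclideanSpace ℝ (Fin n) →L[ℝ] EuclideanSpace ℝ (Fin l)))
    (ε β₀ σ w₀ v B₀ Bc : ℝ)
    (hε : 0 < ε) (hβ₀ : 0 < β₀) (hσ : 1 < σ) (hw₀ : 0 < w₀) (hv : 0 < v)
    (x : ℕ → EuclideanSpace ℝ (Fin n)) (y : ℕ → EuclideanSpace ℝ (Fin l))
    (β γ w : ℕ → ℝ)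
    (hβ : ∀ k : ℕ, β k = β₀ * σ ^ k)
    (hγ : ∀ k : ℕ, γ k = (Real.log 2) ^ 2 * ‖c (x 0)‖ /
      (((k : ℝ) + 1) * (Real.log ((k : ℝ) + 2)) ^ 2))
    (hw : ∀ k : ℕ, w k =
      if c (x (k + 1)) = 0 then w₀ else w₀ * min 1 (γ k / ‖c (x (k + 1))‖))
    (hy0 : y 0 = 0)
    (hyk : ∀ k : ℕ, y (k + 1) = y k + w k • c (x (k + 1)))
    (hstat : ∀ k : ℕ, Metric.infDist 0
      {u : EuclideanSpace ℝ (Fin n) | ∃ s,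
        (∀ z, h z ≥ h (x (k + 1)) + (inner ℝ s (z - x (k + 1)) : ℝ)) ∧
        u = g' (x (k + 1)) +
          ContinuousLinearMap.adjoint (Jc (x (k + 1))) (y k + β k • c (x (k + 1))) + s}
      ≤ ε)
    (hreg : ∀ k : ℕ, 1 ≤ k →
      v * ‖c (x k)‖ ≤ Metric.infDist
        (-(ContinuousLinearMap.adjoint (Jc (x k)) (c (x k))))
        {u : EuclideanSpace ℝ (Fin n) | ∃ s,
          (∀ z, h z ≥ h (x k) + (inner ℝ s (z - x k) : ℝ)) ∧
          u = (1 / β (k - 1)) • s})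
    (hB₀ : ∀ k : ℕ, ‖g' (x k)‖ ≤ B₀)
    (hBc : ∀ k : ℕ, ‖Jc (x k)‖ ≤ Bc)
    (ymax : ℝ)
    (hymax : ymax = w₀ * ‖c (x 0)‖ * (Real.log 2) ^ 2 *
      ∑' t : ℕ, 1 / (((t : ℝ) + 1) * (Real.log ((t : ℝ) + 2)) ^ 2))
    (K : ℕ)
    (hK : K = ⌈Real.logb σ ((ε + B₀ + Bc * ymax) / (v * β₀ * ε))⌉₊ + 1) :
    ‖c (x K)‖ ≤ ε ∧
    Metric.infDist 0
      {u : EuclideanSpace ℝ (Fin n) | ∃ s,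
        (∀ z, h z ≥ h (x K) + (inner ℝ s (z - x K) : ℝ)) ∧
        u = g' (x K) +
          ContinuousLinearMap.adjoint (Jc (x K))
            (y (K - 1) + β (K - 1) • c (x K)) + s} ≤ ε := by
  have hy : ∀ k, ‖y k‖ ≤ ymax := fun k =>
    hymax ▸ norm_le_of_clipped_steps hw₀.le (norm_nonneg _) hγ hw hy0 hyk k
  set A := ε + B₀ + Bc * ymax
  set k := ⌈Real.logb σ (A / (v * β₀ * ε))⌉₊
  subst hK
  simp only [add_tsub_cancel_right]
  refine ⟨?_, hstat k⟩
  set J := ContinuousLinearMap.adjoint (Jc (x (k + 1)))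
  have hβk : 0 < β k := by rw [hβ]; positivity
  have hJy : ‖J (y k)‖ ≤ Bc * ymax :=
    calc ‖J (y k)‖ ≤ ‖Jc (x (k + 1))‖ * ‖y k‖ := by
          rw [← ContinuousLinearMap.adjoint.norm_map]; exact J.le_opNorm _
      _ ≤ Bc * ymax := by gcongr; exacts [(norm_nonneg _).trans (hBc 0), hBc _, hy k]
  have hcβ : β k * (v * ‖c (x (k + 1))‖) ≤ A := by
    calc β k * (v * ‖c (x (k + 1))‖)
        ≤ ‖β k • -J (c (x (k + 1))) + (g' (x (k + 1)) + J (y k + β k • c (x (k + 1))))‖ + ε :=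
          (mul_le_mul_of_nonneg_left (hreg (k + 1) le_add_self) hβk.le).trans <|
            (mul_infDist_smul_le _ _ _ hβk).trans (add_le_add le_rfl (hstat k))
      _ = ‖g' (x (k + 1)) + J (y k)‖ + ε := by rw [map_add, map_smul]; congr 2; module
      _ ≤ A := by linarith [norm_add_le (g' (x (k + 1))) (J (y k)), hB₀ (k + 1)]
  have hAβ : A ≤ β k * (v * ε) := by
    have := mul_le_mul_of_nonneg_right (le_pow_natCeil_logb hσ (A / (v * β₀ * ε)))
      (by positivity : 0 ≤ v * β₀ * ε)
    rw [div_mul_cancel₀ _ (by positivity)] at this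
    rw [hβ]
    linarith
  exact le_of_mul_le_mul_left (le_of_mul_le_mul_left (hcβ.trans hAβ) hβk) hv

/-- ε-KKT reachability part of Theorem 2 of the paper: for the
inexact augmented Lagrangian method with dual steps
`w_k = w₀ min{1, γ_k/‖c(x^{k+1})‖}`, `γ_k = (log 2)²‖c(x⁰)‖/((k+1)(log(k+2))²)`,
penalties `β_k = β₀σ^k`, ε-stationarity of each subproblem solution, the
regularity condition, and uniform bounds `B₀`, `B_c`, the iterate `x^K` with
`K = ⌈log_σ((ε + B₀ + B_c y_max)/(vβ₀ε))⌉ + 1` is an ε-KKT point, certified by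
the multiplier `y^{K−1} + β_{K−1} c(x^K)`. -/
theorem ialm_eps_kkt
    (n l : ℕ) (hn : 0 < n) (hl : 0 < l)
    (g : EuclideanSpace ℝ (Fin n) → ℝ)
    (g' : EuclideanSpace ℝ (Fin n) → EuclideanSpace ℝ (Fin n))
    (hg : ∀ z, HasGradientAt g (g' z) z)
    (h : EuclideanSpace ℝ (Fin n) → ℝ) (hconv : ConvexOn ℝ Set.univ h)
    (c : EuclideanSpace ℝ (Fin n) → EuclideanSpace ℝ (Fin l))
    (Jc : EuclideanSpace ℝ (Fin n) →
      (EuclideanSpace ℝ (Fin n) →L[ℝ] EuclideanSpace ℝ (Fin l)))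
    (hc : ∀ z, HasFDerivAt c (Jc z) z)
    (ε β₀ σ w₀ v B₀ Bc : ℝ)
    (hε : 0 < ε) (hβ₀ : 0 < β₀) (hσ : 1 < σ) (hw₀ : 0 < w₀) (hv : 0 < v)
    (x : ℕ → EuclideanSpace ℝ (Fin n)) (y : ℕ → EuclideanSpace ℝ (Fin l))
    (β γ w : ℕ → ℝ)
    (hβ : ∀ k : ℕ, β k = β₀ * σ ^ k)
    (hγ : ∀ k : ℕ, γ k = (Real.log 2) ^ 2 * ‖c (x 0)‖ /
      (((k : ℝ) + 1) * (Real.log ((k : ℝ) + 2)) ^ 2))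
    (hw : ∀ k : ℕ, w k =
      if c (x (k + 1)) = 0 then w₀ else w₀ * min 1 (γ k / ‖c (x (k + 1))‖))
    (hy0 : y 0 = 0)
    (hyk : ∀ k : ℕ, y (k + 1) = y k + w k • c (x (k + 1)))
    (hstat : ∀ k : ℕ, Metric.infDist 0
      {u : EuclideanSpace ℝ (Fin n) | ∃ s,
        (∀ z, h z ≥ h (x (k + 1)) + (inner ℝ s (z - x (k + 1)) : ℝ)) ∧
        u = g' (x (k + 1)) +
          ContinuousLinearMap.adjoint (Jc (x (k + 1))) (y k + β k • c (x (k + 1))) + s}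
      ≤ ε)
    (hreg : ∀ k : ℕ, 1 ≤ k →
      v * ‖c (x k)‖ ≤ Metric.infDist
        (-(ContinuousLinearMap.adjoint (Jc (x k)) (c (x k))))
        {u : EuclideanSpace ℝ (Fin n) | ∃ s,
          (∀ z, h z ≥ h (x k) + (inner ℝ s (z - x k) : ℝ)) ∧
          u = (1 / β (k - 1)) • s})
    (hB₀ : ∀ k : ℕ, ‖g' (x k)‖ ≤ B₀)
    (hBc : ∀ k : ℕ, ‖Jc (x k)‖ ≤ Bc)
    (ymax : ℝ)
    (hymax : ymax = w₀ * ‖c (x 0)‖ * (Real.log 2) ^ 2 *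
      ∑' t : ℕ, 1 / (((t : ℝ) + 1) * (Real.log ((t : ℝ) + 2)) ^ 2))
    (K : ℕ)
    (hK : K = ⌈Real.logb σ ((ε + B₀ + Bc * ymax) / (v * β₀ * ε))⌉₊ + 1) :
    ‖c (x K)‖ ≤ ε ∧
    Metric.infDist 0
      {u : EuclideanSpace ℝ (Fin n) | ∃ s,
        (∀ z, h z ≥ h (x K) + (inner ℝ s (z - x K) : ℝ)) ∧
        u = g' (x K) +
          ContinuousLinearMap.adjoint (Jc (x K))
            (y (K - 1) + β (K - 1) • c (x K)) + s} ≤ ε :=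
  ialm_eps_kkt_general n l g' h c Jc ε β₀ σ w₀ v B₀ Bc hε hβ₀ hσ hw₀ hv x y β γ w hβ hγ hw hy0 hyk
    hstat hreg hB₀ hBc ymax hymax K hK
end

section
/- Consider the problem min over x ∈ ℝⁿ of f₀(x) = g(x) + h(x) subject to c(x) = 0, where g : ℝⁿ → ℝ is differentiable, h : ℝⁿ → ℝ is convex, and c : ℝⁿ → ℝ^l is differentiable with Jacobian J_c(x). Let ε > 0, β₀ > 0, σ > 1, M > 0, q a nonnegative integer, set β_k = β₀σ^k, and let (x^k)_{k≥0} ⊆ ℝⁿ and (y^k)_{k≥0} ⊆ ℝ^l satisfy: (a) y^0 = 0 and y^{k+1} = y^k + M(k+1)^q · c(x^{k+1})/‖c(x^{k+1})‖ when c(x^{k+1}) ≠ 0, and y^{k+1} = y^k otherwise; (b) for every k ≥ 0, dist(0, {∇g(x^{k+1}) + J_c(x^{k+1})ᵀ(y^k + β_k c(x^{k+1})) + s : s ∈ ∂h(x^{k+1})}) ≤ ε; (c) (regularity) there is v > 0 with v‖c(x^k)‖ ≤ dist(−J_c(x^k)ᵀc(x^k), {s/β_{k−1} : s ∈ ∂h(x^k)})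 for all k ≥ 1; (d) ‖∇g(x^k)‖ ≤ B₀ and the operator norm of J_c(x^k) is at most B_c for all k. Then there exists K ≥ 1 such that x^K is an ε-KKT point: ‖c(x^K)‖ ≤ ε and, with y = y^{K−1} + β_{K−1}c(x^K), dist(0, {∇g(x^K) + J_c(x^K)ᵀ y + s : s ∈ ∂h(x^K)}) ≤ ε. -/
/-!
Each dual step has length at most `M (k+1)^q`, so `‖y^k‖ ≤ M k^(q+1)` grows only polynomially.
Multiplying the regularity residual at `x^{k+1}` by `β_k` turns it into the distance from
`-β_k J_cᵀ c(x^{k+1})` to `∂h(x^{k+1})`, which differs from the stationarity residual of the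
subproblem by at most `‖∇g(x^{k+1}) + J_cᵀ y^k‖ ≤ B₀ + B_c M k^(q+1)`. Hence
`v ‖c(x^{k+1})‖ ≤ (ε + B₀ + B_c M k^(q+1)) / (β₀ σ^k) → 0`, and as soon as this bound drops
below `v ε` the iterate `x^{k+1}` is ε-KKT, the multiplier `y^k + β_k c(x^{k+1})` being
certified by the subproblem's own stationarity.
-/

open Filter Topology Metric
open scoped Pointwise

def subgradients {E : Type*} [NormedAddCommGroup E] [InnerProductSpace ℝ E]
    (h : E → ℝ) (x : E) : Set E :=
  {s | ∀ z, h z ≥ h x + inner ℝ s (z - x)}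

section Subgradients

variable {E : Type*} [NormedAddCommGroup E] [InnerProductSpace ℝ E] (h : E → ℝ) (x : E)

theorem setOf_exists_subgradient_add_eq (w : E) :
    {u | ∃ s, (∀ z, h z ≥ h x + inner ℝ s (z - x)) ∧ u = w + s} =
      (w + ·) '' subgradients h x := by
  ext u
  simp only [Set.mem_ofPred_eq, Set.mem_image, subgradients, eq_comm]

theorem setOf_exists_subgradient_smul_eq (a : ℝ) :
    {u | ∃ s, (∀ z, h z ≥ h x + inner ℝ s (z - x)) ∧ u = a • s} =
      a • subgradients h x := by
  ext u
  simp only [Set.mem_ofPred_eq, Set.mem_smul_set, subgradients, eq_comm]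

end Subgradients

theorem infDist_zero_image_add_left {E : Type*} [SeminormedAddCommGroup E] (T : Set E) (w : E) :
    infDist 0 ((w + ·) '' T) = infDist (-w) T := by
  rw [← infDist_image (isometry_add_left w) (x := -w), add_neg_cancel]

theorem infDist_neg_inv_smul_le {E : Type*} [NormedAddCommGroup E] [NormedSpace ℝ E]
    (T : Set E) {β : ℝ} (hβ : 0 < β) (a w : E) :
    infDist (-a) (β⁻¹ • T) ≤ (infDist 0 ((w + ·) '' T) + ‖w - β • a‖) / β := by
  have hscale : infDist (-a) (β⁻¹ • T) = β⁻¹ * infDist (-(β • a)) T := by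
    simpa only [smul_neg, inv_smul_smul₀ hβ.ne', Real.norm_of_nonneg (inv_nonneg.mpr hβ.le)]
      using infDist_smul₀ (inv_ne_zero hβ.ne') T (-(β • a))
  have htrans : infDist (-(β • a)) T ≤ infDist (-w) T + ‖w - β • a‖ := by
    simpa only [dist_eq_norm, neg_sub_neg] using
      infDist_le_infDist_add_dist (x := -(β • a)) (y := -w) (s := T)
  rw [hscale, infDist_zero_image_add_left, inv_mul_eq_div]
  gcongr

theorem infDist_neg_apply_inv_smul_le {E F : Type*} [NormedAddCommGroup E] [NormedSpace ℝ E]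
    [SeminormedAddCommGroup F] [NormedSpace ℝ F] (T : Set E) (g : E) (A : F →L[ℝ] E) (c y : F)
    {β : ℝ} (hβ : 0 < β) :
    infDist (-A c) (β⁻¹ • T) ≤
      (infDist 0 ((g + A (y + β • c) + ·) '' T) + ‖g‖ + ‖A‖ * ‖y‖) / β := by
  refine (infDist_neg_inv_smul_le T hβ (A c) (g + A (y + β • c))).trans ?_
  have hshift : g + A (y + β • c) - β • A c = g + A y := by
    rw [map_add, map_smul]; abel
  rw [hshift, add_assoc]
  gcongr
  exact (norm_add_le _ _).trans (add_le_add_right (A.le_opNorm y) _)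

theorem norm_div_norm_smul_le {E : Type*} [NormedAddCommGroup E] [NormedSpace ℝ E]
    {t : ℝ} (ht : 0 ≤ t) (v : E) : ‖(t / ‖v‖) • v‖ ≤ t := by
  rcases eq_or_ne v 0 with rfl | hv
  · simpa using ht
  · rw [norm_smul, Real.norm_of_nonneg (by positivity),
      div_mul_cancel₀ _ (norm_ne_zero_iff.mpr hv)]

theorem norm_le_mul_pow_succ_of_norm_sub_le {E : Type*} [SeminormedAddCommGroup E]
    {y : ℕ → E} (hy0 : y 0 = 0) {M : ℝ} {q : ℕ}
    (hstep : ∀ k : ℕ, ‖y (k + 1) - y k‖ ≤ M * ((k : ℝ) + 1) ^ q) (k : ℕ) :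
    ‖y k‖ ≤ M * (k : ℝ) ^ (q + 1) := by
  have hM : 0 ≤ M := by simpa using (norm_nonneg _).trans (hstep 0)
  induction k with
  | zero => simp [hy0]
  | succ k ih =>
    have hpow : (k : ℝ) ^ (q + 1) + ((k : ℝ) + 1) ^ q ≤ ((k : ℝ) + 1) ^ (q + 1) := by
      have : (k : ℝ) ^ q ≤ ((k : ℝ) + 1) ^ q := by gcongr; linarith
      have hk : (0 : ℝ) ≤ k := k.cast_nonneg
      rw [pow_succ, pow_succ]
      nlinarith
    calc ‖y (k + 1)‖ ≤ ‖y k‖ + ‖y (k + 1) - y k‖ := norm_le_insert' _ _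
      _ ≤ M * (k : ℝ) ^ (q + 1) + M * ((k : ℝ) + 1) ^ q := add_le_add ih (hstep k)
      _ ≤ M * ((k + 1 : ℕ) : ℝ) ^ (q + 1) := by push_cast; rw [← mul_add]; gcongr

theorem tendsto_add_mul_pow_div_mul_pow (a b β₀ : ℝ) (p : ℕ) {σ : ℝ} (hσ : 1 < σ) :
    Tendsto (fun k : ℕ => (a + b * (k : ℝ) ^ p) / (β₀ * σ ^ k)) atTop (𝓝 0) := by
  have hpoly (m : ℕ) := tendsto_pow_const_div_const_pow_of_one_lt m hσ
  have hlim := ((hpoly 0).const_mul a |>.add ((hpoly p).const_mul b)).const_mul β₀⁻¹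
  simp only [mul_zero, add_zero] at hlim
  refine hlim.congr fun k => ?_
  simp only [pow_zero, div_eq_mul_inv, mul_inv]
  ring

theorem ialm_eps_kkt_general_steps_general
    (n l : ℕ)
    (g' : EuclideanSpace ℝ (Fin n) → EuclideanSpace ℝ (Fin n))
    (h : EuclideanSpace ℝ (Fin n) → ℝ)
    (c : EuclideanSpace ℝ (Fin n) → EuclideanSpace ℝ (Fin l))
    (Jc : EuclideanSpace ℝ (Fin n) →
      (EuclideanSpace ℝ (Fin n) →L[ℝ] EuclideanSpace ℝ (Fin l)))
    (ε β₀ σ M v B₀ Bc : ℝ) (q : ℕ)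
    (hε : 0 < ε) (hβ₀ : 0 < β₀) (hσ : 1 < σ) (hM : 0 < M) (hv : 0 < v)
    (x : ℕ → EuclideanSpace ℝ (Fin n)) (y : ℕ → EuclideanSpace ℝ (Fin l))
    (β : ℕ → ℝ)
    (hβ : ∀ k : ℕ, β k = β₀ * σ ^ k)
    (hy0 : y 0 = 0)
    (hyk : ∀ k : ℕ, y (k + 1) =
      if c (x (k + 1)) = 0 then y k
      else y k + ((M * ((k : ℝ) + 1) ^ q) / ‖c (x (k + 1))‖) • c (x (k + 1)))
    (hstat : ∀ k : ℕ, Metric.infDist 0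
      {u : EuclideanSpace ℝ (Fin n) | ∃ s,
        (∀ z, h z ≥ h (x (k + 1)) + (inner ℝ s (z - x (k + 1)) : ℝ)) ∧
        u = g' (x (k + 1)) +
          ContinuousLinearMap.adjoint (Jc (x (k + 1))) (y k + β k • c (x (k + 1))) + s}
      ≤ ε)
    (hreg : ∀ k : ℕ, 1 ≤ k →
      v * ‖c (x k)‖ ≤ Metric.infDist
        (-(ContinuousLinearMap.adjoint (Jc (x k)) (c (x k))))
        {u : EuclideanSpace ℝ (Fin n) | ∃ s,
          (∀ z, h z ≥ h (x k) + (inner ℝ s (z - x k) : ℝ)) ∧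
          u = (1 / β (k - 1)) • s})
    (hB₀ : ∀ k : ℕ, ‖g' (x k)‖ ≤ B₀)
    (hBc : ∀ k : ℕ, ‖Jc (x k)‖ ≤ Bc) :
    ∃ K : ℕ, 1 ≤ K ∧
      ‖c (x K)‖ ≤ ε ∧
      Metric.infDist 0
        {u : EuclideanSpace ℝ (Fin n) | ∃ s,
          (∀ z, h z ≥ h (x K) + (inner ℝ s (z - x K) : ℝ)) ∧
          u = g' (x K) +
            ContinuousLinearMap.adjoint (Jc (x K))
              (y (K - 1) + β (K - 1) • c (x K)) + s} ≤ ε := by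
  have hβpos (k : ℕ) : 0 < β k := hβ k ▸ by positivity
  have hBc0 : 0 ≤ Bc := (norm_nonneg _).trans (hBc 0)
  have hdual : ∀ k, ‖y k‖ ≤ M * (k : ℝ) ^ (q + 1) :=
    norm_le_mul_pow_succ_of_norm_sub_le hy0 fun k => by
      rw [hyk k]
      split_ifs
      · simp only [sub_self, norm_zero]; positivity
      · simpa only [add_sub_cancel_left] using norm_div_norm_smul_le (by positivity) _
  have hviol (k : ℕ) :
      v * ‖c (x (k + 1))‖ ≤ (ε + B₀ + Bc * M * (k : ℝ) ^ (q + 1)) / (β₀ * σ ^ k) := by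
    set A := ContinuousLinearMap.adjoint (Jc (x (k + 1)))
    have hA : ‖A‖ = ‖Jc (x (k + 1))‖ := LinearIsometryEquiv.norm_map _ _
    calc v * ‖c (x (k + 1))‖
        ≤ infDist (-A (c (x (k + 1)))) ((β k)⁻¹ • subgradients h (x (k + 1))) := by
          simpa only [setOf_exists_subgradient_smul_eq, one_div, Nat.add_sub_cancel]
            using hreg (k + 1) (by omega)
      _ ≤ _ := infDist_neg_apply_inv_smul_le _ (g' (x (k + 1))) A _ (y k) (hβpos k)
      _ ≤ (ε + B₀ + Bc * (M * (k : ℝ) ^ (q + 1))) / β k := by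
          rw [← setOf_exists_subgradient_add_eq, hA]
          gcongr
          exacts [(hβpos k).le, hstat k, hB₀ _, hBc _, hdual k]
      _ = _ := by rw [hβ, mul_assoc]
  obtain ⟨k, hk⟩ := ((tendsto_add_mul_pow_div_mul_pow (ε + B₀) (Bc * M) β₀ (q + 1) hσ).eventually
    (gt_mem_nhds (mul_pos hv hε))).exists
  have hfeas : ‖c (x (k + 1))‖ ≤ ε := (lt_of_mul_lt_mul_left ((hviol k).trans_lt hk) hv.le).le
  exact ⟨k + 1, by omega, hfeas, hstat k⟩

/-- ε-KKT reachability part of Theorem 3 of the paper: for the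
inexact augmented Lagrangian method with general dual step sizes
`w_k = M(k+1)^q/‖c(x^{k+1})‖`, penalties `β_k = β₀σ^k`, ε-stationarity of each
subproblem solution, the regularity condition, and uniform bounds `B₀`, `B_c`,
some outer iterate `x^K` (K ≥ 1) is an ε-KKT point, certified by the multiplier
`y^{K−1} + β_{K−1} c(x^K)`. -/
theorem ialm_eps_kkt_general_steps
    (n l : ℕ) (hn : 0 < n) (hl : 0 < l)
    (g : EuclideanSpace ℝ (Fin n) → ℝ)
    (g' : EuclideanSpace ℝ (Fin n) → EuclideanSpace ℝ (Fin n))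
    (hg : ∀ z, HasGradientAt g (g' z) z)
    (h : EuclideanSpace ℝ (Fin n) → ℝ) (hconv : ConvexOn ℝ Set.univ h)
    (c : EuclideanSpace ℝ (Fin n) → EuclideanSpace ℝ (Fin l))
    (Jc : EuclideanSpace ℝ (Fin n) →
      (EuclideanSpace ℝ (Fin n) →L[ℝ] EuclideanSpace ℝ (Fin l)))
    (hc : ∀ z, HasFDerivAt c (Jc z) z)
    (ε β₀ σ M v B₀ Bc : ℝ) (q : ℕ)
    (hε : 0 < ε) (hβ₀ : 0 < β₀) (hσ : 1 < σ) (hM : 0 < M) (hv : 0 < v)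
    (x : ℕ → EuclideanSpace ℝ (Fin n)) (y : ℕ → EuclideanSpace ℝ (Fin l))
    (β : ℕ → ℝ)
    (hβ : ∀ k : ℕ, β k = β₀ * σ ^ k)
    (hy0 : y 0 = 0)
    (hyk : ∀ k : ℕ, y (k + 1) =
      if c (x (k + 1)) = 0 then y k
      else y k + ((M * ((k : ℝ) + 1) ^ q) / ‖c (x (k + 1))‖) • c (x (k + 1)))
    (hstat : ∀ k : ℕ, Metric.infDist 0
      {u : EuclideanSpace ℝ (Fin n) | ∃ s,
        (∀ z, h z ≥ h (x (k + 1)) + (inner ℝ s (z - x (k + 1)) : ℝ)) ∧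
        u = g' (x (k + 1)) +
          ContinuousLinearMap.adjoint (Jc (x (k + 1))) (y k + β k • c (x (k + 1))) + s}
      ≤ ε)
    (hreg : ∀ k : ℕ, 1 ≤ k →
      v * ‖c (x k)‖ ≤ Metric.infDist
        (-(ContinuousLinearMap.adjoint (Jc (x k)) (c (x k))))
        {u : EuclideanSpace ℝ (Fin n) | ∃ s,
          (∀ z, h z ≥ h (x k) + (inner ℝ s (z - x k) : ℝ)) ∧
          u = (1 / β (k - 1)) • s})
    (hB₀ : ∀ k : ℕ, ‖g' (x k)‖ ≤ B₀)
    (hBc : ∀ k : ℕ, ‖Jc (x k)‖ ≤ Bc) :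
    ∃ K : ℕ, 1 ≤ K ∧
      ‖c (x K)‖ ≤ ε ∧
      Metric.infDist 0
        {u : EuclideanSpace ℝ (Fin n) | ∃ s,
          (∀ z, h z ≥ h (x K) + (inner ℝ s (z - x K) : ℝ)) ∧
          u = g' (x K) +
            ContinuousLinearMap.adjoint (Jc (x K))
              (y (K - 1) + β (K - 1) • c (x K)) + s} ≤ ε :=
  ialm_eps_kkt_general_steps_general n l g' h c Jc ε β₀ σ M v B₀ Bc q hε hβ₀ hσ hM hv x y β hβ hy0
    hyk hstat hreg hB₀ hBc
end
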